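/- arXiv:1904.00752 — 10 statements merged into one kernel-verified Lean document; each statement's English description precedes it below -/
import Mathlib

section
/- For all real numbers a1 ≥ a2, b1 ≥ b2 and every φ ∈ ℝ, the two eigenvalues γ1 ≥ γ2 of the 2×2 real symmetric matrix M = diag(a1, a2) + R(φ)·diag(b1, b2)·R(φ)ᵀ satisfy γ1 − γ2 = sqrt((a1−a2)² + (b1−b2)² + 2(a1−a2)(b1−b2)·cos(2φ)). -/
open Polynomial Matrix Real

/-- The 2×2 rotation matrix `R(φ)`. -/
noncomputable def rotMat (φ : ℝ) : Matrix (Fin 2) (Fin 2) ℝ :=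
  !![Real.cos φ, -Real.sin φ; Real.sin φ, Real.cos φ]

/-- For all real numbers `a1 ≥ a2`, `b1 ≥ b2` and every `φ ∈ ℝ`, the two
eigenvalues `γ1 ≥ γ2` of the 2×2 real symmetric matrix
`M = diag(a1, a2) + R(φ)·diag(b1, b2)·R(φ)ᵀ` satisfy
`γ1 − γ2 = sqrt((a1−a2)² + (b1−b2)² + 2(a1−a2)(b1−b2)·cos(2φ))`. -/
theorem eigenvalue_gap_formula (a1 a2 b1 b2 φ γ1 γ2 : ℝ)
    (ha : a2 ≤ a1) (hb : b2 ≤ b1) (hγ : γ2 ≤ γ1)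
    (heig : (!![a1, 0; 0, a2] + rotMat φ * !![b1, 0; 0, b2] * (rotMat φ)ᵀ).charpoly
      = (X - Polynomial.C γ1) * (X - Polynomial.C γ2)) :
    γ1 - γ2 = Real.sqrt ((a1 - a2) ^ 2 + (b1 - b2) ^ 2
      + 2 * (a1 - a2) * (b1 - b2) * Real.cos (2 * φ)) := by
  set M := !![a1, 0; 0, a2] + rotMat φ * !![b1, 0; 0, b2] * (rotMat φ)ᵀ with hM
  have h1 : M.trace = γ1 + γ2 := by
    have ht := Matrix.trace_eq_neg_charpoly_coeff M
    rw [heig] at ht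
    simp only [Fintype.card_fin] at ht
    have : ((X - Polynomial.C γ1) * (X - Polynomial.C γ2)).coeff 1 = -(γ1 + γ2) := by
      simp [sub_mul, mul_sub, Polynomial.coeff_one]
      ring
    rw [this] at ht
    linarith
  have h0 : M.det = γ1 * γ2 := by
    have hd := Matrix.det_eq_sign_charpoly_coeff M
    rw [heig] at hd
    simp only [Fintype.card_fin] at hd
    have : ((X - Polynomial.C γ1) * (X - Polynomial.C γ2)).coeff 0 = γ1 * γ2 := by
      simp [sub_mul, mul_sub]
    rw [this] at hd
    simpa using hd
  have htr : M.trace = a1 + a2 + b1 + b2 := by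
    simp [hM, rotMat, Matrix.trace_fin_two, Matrix.mul_apply, Fin.sum_univ_two,
      Matrix.vecHead, Matrix.vecTail, Matrix.vecMul, dotProduct]
    linear_combination (b1 + b2) * Real.sin_sq_add_cos_sq φ
  have hdet : M.det = (a1 + b1 * Real.cos φ ^ 2 + b2 * Real.sin φ ^ 2)
      * (a2 + b1 * Real.sin φ ^ 2 + b2 * Real.cos φ ^ 2)
      - (b1 - b2) ^ 2 * Real.sin φ ^ 2 * Real.cos φ ^ 2 := by
    simp [hM, rotMat, Matrix.det_fin_two, Matrix.mul_apply, Fin.sum_univ_two,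
      Matrix.vecHead, Matrix.vecTail, Matrix.vecMul, dotProduct]
    ring
  have hsq : (γ1 - γ2) ^ 2 = (a1 - a2) ^ 2 + (b1 - b2) ^ 2
      + 2 * (a1 - a2) * (b1 - b2) * Real.cos (2 * φ) := by
    have hs : Real.sin φ ^ 2 = 1 - Real.cos φ ^ 2 := by
      nlinarith [Real.sin_sq_add_cos_sq φ]
    rw [htr] at h1
    rw [hdet, hs] at h0
    rw [Real.cos_two_mul]
    linear_combination (-(a1 + a2 + b1 + b2 + γ1 + γ2)) * h1 + 4 * h0
  rw [← hsq, Real.sqrt_sq (by linarith : (0:ℝ) ≤ γ1 - γ2)]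
end

section
/- Let a1 > a2 and b1 > b2 be real numbers and set a = a1 − a2, b = b1 − b2. Then the set of eigenvalue gaps {γ1 − γ2 : M = diag(a1, a2) + Q·diag(b1, b2)·Qᵀ, Q ∈ SO(2)}, where γ1 ≥ γ2 are the eigenvalues of M, is exactly the closed interval [|a − b|, a + b]. -/
open Polynomial Matrix

/-!
An element of SO(2) is a rotation `Q = !![c, -s; s, c]` with `c² + s² = 1`, since its transpose
equals its adjugate. The gap of a 2 × 2 matrix with real eigenvalues is the square root of its
discriminant `tr² - 4 det`, which for `diag(a1, a2) + Q diag(b1, b2) Qᵀ` equals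
`a² + b² + 2ab (c² - s²)`. As `(c, s)` runs over the unit circle, `c² - s²` runs over `[-1, 1]`,
so the squared gap runs over `[(a - b)², (a + b)²]`.
-/

namespace Matrix

lemma transpose_mul_self_eq_one_and_det_eq_one_iff_fin_two {R : Type*} [CommRing R]
    (Q : Matrix (Fin 2) (Fin 2) R) :
    Qᵀ * Q = 1 ∧ Q.det = 1 ↔ ∃ c s : R, c ^ 2 + s ^ 2 = 1 ∧ Q = !![c, -s; s, c] := by
  constructor
  · rintro ⟨hQ, hdet⟩
    have hadj : Qᵀ = Q.adjugate := by
      rw [← Matrix.inv_eq_left_inv hQ, Matrix.inv_def, hdet, Ring.inverse_one, one_smul]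
    rw [adjugate_fin_two, ← Matrix.ext_iff] at hadj
    have h01 := hadj 0 1
    have h11 := hadj 1 1
    simp only [transpose_apply, of_apply, cons_val', cons_val_zero, cons_val_one,
      empty_val', cons_val_fin_one] at h01 h11
    refine ⟨Q 0 0, Q 1 0, ?_, ?_⟩
    · rw [det_fin_two, h11] at hdet
      linear_combination hdet + Q 1 0 * h01
    · ext i j
      fin_cases i <;> fin_cases j <;> simp [h01, h11]
  · rintro ⟨c, s, hcs, rfl⟩
    refine ⟨?_, ?_⟩
    · ext i j
      fin_cases i <;> fin_cases j <;>
        simp [Matrix.mul_apply, Fin.sum_univ_two] <;> grind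
    · rw [det_fin_two_of]
      linear_combination hcs

lemma charpoly_fin_two_eq_iff {R : Type*} [CommRing R] [Nontrivial R]
    (M : Matrix (Fin 2) (Fin 2) R) (γ₁ γ₂ : R) :
    M.charpoly = (X - C γ₁) * (X - C γ₂) ↔ M.trace = γ₁ + γ₂ ∧ M.det = γ₁ * γ₂ := by
  have hfactor : (X - C γ₁) * (X - C γ₂) = X ^ 2 - C (γ₁ + γ₂) * X + C (γ₁ * γ₂) := by
    simp only [C_add, C_mul]
    ring
  rw [charpoly_fin_two, hfactor]
  refine ⟨fun h ↦ ⟨?_, ?_⟩, fun ⟨htr, hdet⟩ ↦ by rw [htr, hdet]⟩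
  · exact neg_inj.1 (by simpa using congrArg (coeff · 1) h)
  · simpa using congrArg (coeff · 0) h

lemma exists_eigenvalue_gap_eq_iff_sq_eq_discr {K : Type*} [Field K] [LinearOrder K]
    [IsStrictOrderedRing K] (M : Matrix (Fin 2) (Fin 2) K) (g : K) :
    (∃ γ₁ γ₂ : K, γ₂ ≤ γ₁ ∧ M.charpoly = (X - C γ₁) * (X - C γ₂) ∧ g = γ₁ - γ₂) ↔
      0 ≤ g ∧ g ^ 2 = M.discr := by
  simp only [charpoly_fin_two_eq_iff, discr_fin_two]
  constructor
  · rintro ⟨γ₁, γ₂, hle, ⟨htr, hdet⟩, rfl⟩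
    exact ⟨sub_nonneg.2 hle, by rw [htr, hdet]; ring⟩
  · rintro ⟨hg, hdisc⟩
    refine ⟨(M.trace + g) / 2, (M.trace - g) / 2, by linarith, ⟨by ring, ?_⟩, by ring⟩
    linear_combination hdisc / 4

lemma discr_diagonal_add_rotation_conj {R : Type*} [CommRing R] (a₁ a₂ b₁ b₂ c s : R)
    (hcs : c ^ 2 + s ^ 2 = 1) :
    (!![a₁, 0; 0, a₂] + !![c, -s; s, c] * !![b₁, 0; 0, b₂] * !![c, -s; s, c]ᵀ).discr =
      (a₁ - a₂) ^ 2 + (b₁ - b₂) ^ 2 + 2 * (a₁ - a₂) * (b₁ - b₂) * (c ^ 2 - s ^ 2) := by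
  have hM : !![a₁, 0; 0, a₂] + !![c, -s; s, c] * !![b₁, 0; 0, b₂] * !![c, -s; s, c]ᵀ =
      !![a₁ + c ^ 2 * b₁ + s ^ 2 * b₂, c * s * (b₁ - b₂);
        c * s * (b₁ - b₂), a₂ + s ^ 2 * b₁ + c ^ 2 * b₂] := by
    ext i j
    fin_cases i <;> fin_cases j <;> simp [vecMul, dotProduct, Fin.sum_univ_two] <;> ring
  rw [hM, discr_fin_two, trace_fin_two_of, det_fin_two_of]
  linear_combination (b₁ - b₂) ^ 2 * (c ^ 2 + s ^ 2 + 1) * hcs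

end Matrix

lemma mem_Icc_neg_one_one_iff_exists_sq_add_sq_eq_one (t : ℝ) :
    t ∈ Set.Icc (-1) 1 ↔ ∃ c s : ℝ, c ^ 2 + s ^ 2 = 1 ∧ c ^ 2 - s ^ 2 = t := by
  constructor
  · rintro ⟨ht₁, ht₂⟩
    have hc := Real.sq_sqrt (show 0 ≤ (1 + t) / 2 by linarith)
    have hs := Real.sq_sqrt (show 0 ≤ (1 - t) / 2 by linarith)
    exact ⟨√((1 + t) / 2), √((1 - t) / 2), by rw [hc, hs]; ring, by rw [hc, hs]; ring⟩
  · rintro ⟨c, s, hcs, rfl⟩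
    constructor <;> nlinarith [sq_nonneg c, sq_nonneg s]

lemma mem_Icc_abs_sub_add_iff {a b : ℝ} (ha : 0 < a) (hb : 0 < b) (g : ℝ) :
    g ∈ Set.Icc |a - b| (a + b) ↔
      0 ≤ g ∧ ∃ t ∈ Set.Icc (-1 : ℝ) 1, g ^ 2 = a ^ 2 + b ^ 2 + 2 * a * b * t := by
  constructor
  · rintro ⟨hlo, hhi⟩
    have hg : 0 ≤ g := (abs_nonneg _).trans hlo
    have hlo' : (a - b) ^ 2 ≤ g ^ 2 := sq_le_sq.2 (by rwa [abs_of_nonneg hg])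
    have hhi' : g ^ 2 ≤ (a + b) ^ 2 := pow_le_pow_left₀ hg hhi 2
    have hab : 0 < 2 * a * b := by positivity
    refine ⟨hg, (g ^ 2 - a ^ 2 - b ^ 2) / (2 * a * b), ⟨?_, ?_⟩, by field_simp; ring⟩
    · rw [le_div_iff₀ hab]; linarith
    · rw [div_le_iff₀ hab]; linarith
  · rintro ⟨hg, t, ⟨ht₁, ht₂⟩, hgt⟩
    have hab : 0 ≤ a * b := by positivity
    refine ⟨abs_le_of_sq_le_sq ?_ hg, (sq_le_sq₀ hg (by positivity)).1 ?_⟩ <;> nlinarith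

/-- For `a1 > a2`, `b1 > b2`, with `a = a1 − a2` and `b = b1 − b2`, the set of
eigenvalue gaps `γ1 − γ2` of matrices `M = diag(a1, a2) + Q·diag(b1, b2)·Qᵀ` with `Q ∈ SO(2)`
is exactly the closed interval `[|a − b|, a + b]`. -/
theorem eigenvalue_gap_range (a1 a2 b1 b2 : ℝ) (ha : a2 < a1) (hb : b2 < b1) :
    {g : ℝ | ∃ (Q : Matrix (Fin 2) (Fin 2) ℝ) (γ1 γ2 : ℝ),
        Qᵀ * Q = 1 ∧ Q.det = 1 ∧ γ2 ≤ γ1 ∧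
        (!![a1, 0; 0, a2] + Q * !![b1, 0; 0, b2] * Qᵀ).charpoly
          = (X - Polynomial.C γ1) * (X - Polynomial.C γ2) ∧
        g = γ1 - γ2} =
      Set.Icc |(a1 - a2) - (b1 - b2)| ((a1 - a2) + (b1 - b2)) := by
  ext g
  rw [Set.mem_ofPred_eq, mem_Icc_abs_sub_add_iff (sub_pos.2 ha) (sub_pos.2 hb)]
  constructor
  · rintro ⟨Q, γ1, γ2, hQ, hdet, hle, hchar, rfl⟩
    obtain ⟨c, s, hcs, rfl⟩ :=
      (transpose_mul_self_eq_one_and_det_eq_one_iff_fin_two Q).1 ⟨hQ, hdet⟩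
    obtain ⟨hg, hdisc⟩ := (exists_eigenvalue_gap_eq_iff_sq_eq_discr _ _).1 ⟨γ1, γ2, hle, hchar, rfl⟩
    refine ⟨hg, c ^ 2 - s ^ 2, (mem_Icc_neg_one_one_iff_exists_sq_add_sq_eq_one _).2
      ⟨c, s, hcs, rfl⟩, ?_⟩
    rw [hdisc, discr_diagonal_add_rotation_conj _ _ _ _ _ _ hcs]
  · rintro ⟨hg, t, ht, hgt⟩
    obtain ⟨c, s, hcs, rfl⟩ := (mem_Icc_neg_one_one_iff_exists_sq_add_sq_eq_one t).1 ht
    obtain ⟨hQ, hdet⟩ :=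
      (transpose_mul_self_eq_one_and_det_eq_one_iff_fin_two !![c, -s; s, c]).2 ⟨c, s, hcs, rfl⟩
    obtain ⟨γ1, γ2, hle, hchar, rfl⟩ := (exists_eigenvalue_gap_eq_iff_sq_eq_discr _ g).2
      ⟨hg, by rw [discr_diagonal_add_rotation_conj _ _ _ _ _ _ hcs, hgt]⟩
    exact ⟨_, γ1, γ2, hQ, hdet, hle, hchar, rfl⟩
end

section
/- Let a, b > 0. If φ is distributed according to μ (the uniform probability measure on [0, 2π)), then for every t ∈ [|a − b|, a + b], the probability that Ψ(φ) ≤ t equals (1/π)·arccos((a² + b² − t²)/(2ab)). -/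
open MeasureTheory Real Set

/-- The eigenvalue-gap function `Ψ(φ) = sqrt(a² + b² + 2ab·cos(2φ))`. -/
noncomputable def gapFun (a b : ℝ) (φ : ℝ) : ℝ :=
  Real.sqrt (a ^ 2 + b ^ 2 + 2 * a * b * Real.cos (2 * φ))

/-- The uniform probability measure on `[0, 2π)`. -/
noncomputable def uniformMeasure : Measure ℝ :=
  (ENNReal.ofReal (2 * Real.pi))⁻¹ • (volume.restrict (Set.Ico 0 (2 * Real.pi)))

lemma cos_le_cos_iff_aux {x θ : ℝ} (hx0 : 0 ≤ x) (hx2 : x ≤ 2 * π)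
    (hθ0 : 0 ≤ θ) (hθπ : θ ≤ π) :
    Real.cos x ≤ Real.cos θ ↔ θ ≤ x ∧ x ≤ 2 * π - θ := by
  constructor
  · intro h
    constructor
    · by_contra hlt
      push_neg at hlt
      have := Real.cos_lt_cos_of_nonneg_of_le_pi hx0 hθπ hlt
      linarith
    · by_contra hlt
      push_neg at hlt
      have h1 : 0 ≤ 2 * π - x := by linarith
      have h2 : 2 * π - x < θ := by linarith
      have := Real.cos_lt_cos_of_nonneg_of_le_pi h1 hθπ h2
      rw [Real.cos_two_pi_sub] at this
      linarith
  · rintro ⟨h1, h2⟩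
    rcases le_or_gt x π with hxπ | hxπ
    · exact Real.cos_le_cos_of_nonneg_of_le_pi hθ0 hxπ h1
    · rw [← Real.cos_two_pi_sub]
      exact Real.cos_le_cos_of_nonneg_of_le_pi hθ0 (by linarith) (by linarith)

/-- For `a, b > 0` and `φ` uniformly distributed on `[0, 2π)`, for every
`t ∈ [|a − b|, a + b]` the probability that `Ψ(φ) ≤ t` equals
`(1/π)·arccos((a² + b² − t²)/(2ab))`. -/
theorem gap_cdf (a b : ℝ) (ha : 0 < a) (hb : 0 < b) (t : ℝ)
    (ht : t ∈ Set.Icc |a - b| (a + b)) :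
    uniformMeasure {φ : ℝ | gapFun a b φ ≤ t}
      = ENNReal.ofReal ((1 / Real.pi) * Real.arccos ((a ^ 2 + b ^ 2 - t ^ 2) / (2 * a * b))) := by
  obtain ⟨ht1, ht2⟩ := ht
  have ht0 : 0 ≤ t := le_trans (abs_nonneg _) ht1
  have hab : (0:ℝ) < 2 * a * b := by positivity
  set c : ℝ := (a ^ 2 + b ^ 2 - t ^ 2) / (2 * a * b) with hc
  have htsq1 : (a - b) ^ 2 ≤ t ^ 2 := by nlinarith [sq_abs (a - b), abs_nonneg (a - b)]
  have htsq2 : t ^ 2 ≤ (a + b) ^ 2 := by nlinarith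
  have hc1 : -1 ≤ c := by
    rw [hc, le_div_iff₀ hab]; nlinarith
  have hc2 : c ≤ 1 := by
    rw [hc, div_le_iff₀ hab]; nlinarith
  set θ : ℝ := Real.arccos (-c) with hθ
  have hθ0 : 0 ≤ θ := Real.arccos_nonneg _
  have hθπ : θ ≤ π := Real.arccos_le_pi _
  have hcosθ : Real.cos θ = -c := Real.cos_arccos (by linarith) (by linarith)
  have hkey : 2 * a * b * Real.cos θ = t ^ 2 - a ^ 2 - b ^ 2 := by
    rw [hcosθ, hc]; field_simp; ring
  -- rewrite the event
  have hset : {φ : ℝ | gapFun a b φ ≤ t} = {φ : ℝ | Real.cos (2 * φ) ≤ Real.cos θ} := by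
    ext φ
    simp only [gapFun, mem_setOf_eq]
    have hX : 0 ≤ a ^ 2 + b ^ 2 + 2 * a * b * Real.cos (2 * φ) := by
      nlinarith [Real.neg_one_le_cos (2 * φ)]
    constructor
    · intro h
      have hsq : a ^ 2 + b ^ 2 + 2 * a * b * Real.cos (2 * φ) ≤ t ^ 2 := by
        nlinarith [Real.sq_sqrt hX, Real.sqrt_nonneg (a ^ 2 + b ^ 2 + 2 * a * b * Real.cos (2 * φ))]
      nlinarith
    · intro h
      have hle : a ^ 2 + b ^ 2 + 2 * a * b * Real.cos (2 * φ) ≤ t ^ 2 := by nlinarith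
      calc Real.sqrt (a ^ 2 + b ^ 2 + 2 * a * b * Real.cos (2 * φ))
          ≤ Real.sqrt (t ^ 2) := Real.sqrt_le_sqrt hle
        _ = t := Real.sqrt_sq ht0
  have hmeas : MeasurableSet {φ : ℝ | Real.cos (2 * φ) ≤ Real.cos θ} :=
    measurableSet_le ((Real.continuous_cos.comp (continuous_const.mul continuous_id)).measurable)
      measurable_const
  set S := {φ : ℝ | Real.cos (2 * φ) ≤ Real.cos θ} with hS
  set A := Set.Icc (θ / 2) (π - θ / 2) with hA
  set B := Set.Icc (π + θ / 2) (2 * π - θ / 2) with hB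
  have hpi : (0:ℝ) < π := Real.pi_pos
  have h1 : S ∩ Set.Ico 0 (2 * π) ⊆ A ∪ B := by
    rintro φ ⟨hφS, hφ0, hφ2⟩
    simp only [hS, mem_setOf_eq] at hφS
    rcases le_or_gt φ π with hφπ | hφπ
    · left
      have := (cos_le_cos_iff_aux (by linarith : (0:ℝ) ≤ 2 * φ) (by linarith) hθ0 hθπ).mp hφS
      exact ⟨by linarith [this.1], by linarith [this.2]⟩
    · right
      have hcos : Real.cos (2 * φ - 2 * π) = Real.cos (2 * φ) := Real.cos_sub_two_pi _
      have := (cos_le_cos_iff_aux (by linarith : (0:ℝ) ≤ 2 * φ - 2 * π) (by linarith) hθ0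
        hθπ).mp (by rw [hcos]; exact hφS)
      exact ⟨by linarith [this.1], by linarith [this.2]⟩
  have h2 : A ∪ B ⊆ (S ∩ Set.Ico 0 (2 * π)) ∪ {2 * π} := by
    rintro φ (⟨hφ1, hφ2⟩ | ⟨hφ1, hφ2⟩)
    · left
      refine ⟨?_, ⟨by linarith, by linarith⟩⟩
      simp only [hS, mem_setOf_eq]
      exact (cos_le_cos_iff_aux (by linarith : (0:ℝ) ≤ 2 * φ) (by linarith) hθ0 hθπ).mpr
        ⟨by linarith, by linarith⟩
    · have hφcos : Real.cos (2 * φ) ≤ Real.cos θ := by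
        rw [← Real.cos_sub_two_pi (2 * φ)]
        exact (cos_le_cos_iff_aux (by linarith : (0:ℝ) ≤ 2 * φ - 2 * π) (by linarith) hθ0
          hθπ).mpr ⟨by linarith, by linarith⟩
      rcases lt_or_ge φ (2 * π) with hφlt | hφge
      · left; exact ⟨hφcos, ⟨by linarith, hφlt⟩⟩
      · right; have : φ = 2 * π := le_antisymm (by linarith) hφge
        simp [this]
  have hAB : A ∩ B ⊆ {π} := by
    rintro x ⟨⟨hx1, hx2⟩, ⟨hx3, hx4⟩⟩
    have : x = π := le_antisymm (by linarith) (by linarith)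
    simp [this]
  have hvolU : volume (A ∪ B) = ENNReal.ofReal (π - θ) + ENNReal.ofReal (π - θ) := by
    rw [measure_union₀ (measurableSet_Icc.nullMeasurableSet)
      (measure_mono_null hAB (measure_singleton π))]
    rw [Real.volume_Icc, Real.volume_Icc]
    congr 1 <;> congr 1 <;> ring
  have hvol : volume (S ∩ Set.Ico 0 (2 * π)) = ENNReal.ofReal (π - θ) + ENNReal.ofReal (π - θ) := by
    refine le_antisymm ?_ ?_
    · rw [← hvolU]; exact measure_mono h1
    · rw [← hvolU]
      calc volume (A ∪ B) ≤ volume ((S ∩ Set.Ico 0 (2 * π)) ∪ {2 * π}) := measure_mono h2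
        _ ≤ volume (S ∩ Set.Ico 0 (2 * π)) + volume ({2 * π} : Set ℝ) := measure_union_le _ _
        _ = volume (S ∩ Set.Ico 0 (2 * π)) := by rw [measure_singleton, add_zero]
  rw [hset, uniformMeasure, Measure.smul_apply, smul_eq_mul,
    Measure.restrict_apply hmeas]
  rw [hvol]
  have harccos : Real.arccos c = π - θ := by
    rw [hθ, Real.arccos_neg]; ring
  rw [← ENNReal.ofReal_add (by linarith) (by linarith)]
  have hdiv : (ENNReal.ofReal (2 * π))⁻¹ * ENNReal.ofReal ((π - θ) + (π - θ))
      = ENNReal.ofReal (((π - θ) + (π - θ)) / (2 * π)) := by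
    rw [ENNReal.ofReal_div_of_pos (by positivity), div_eq_mul_inv, mul_comm]
  rw [hdiv]
  congr 1
  rw [harccos]
  field_simp
  ring
end

section
/- Let a, b > 0. The pushforward of μ under Ψ equals the measure on ℝ with density f(t) = (2t/π)·(((a+b)² − t²)·(t² − (a−b)²))^{−1/2} for t in the open interval (|a − b|, a + b), and density 0 outside this interval, with respect to Lebesgue measure on ℝ. -/
open MeasureTheory Real Set
open scoped ENNReal

namespace GapAux

variable {a b : ℝ}

lemma u_bounds (ha : 0 < a) (hb : 0 < b) {φ : ℝ} (hφ : φ ∈ Ioo 0 (π / 2)) :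
    (a - b) ^ 2 < a ^ 2 + b ^ 2 + 2 * a * b * Real.cos (2 * φ) ∧
      a ^ 2 + b ^ 2 + 2 * a * b * Real.cos (2 * φ) < (a + b) ^ 2 := by
  obtain ⟨h0, h1⟩ := hφ
  have hπ := Real.pi_pos
  have hmem : (2 * φ) ∈ Icc (0:ℝ) π := ⟨by linarith, by linarith⟩
  have hc1 : Real.cos (2 * φ) < Real.cos 0 :=
    Real.strictAntiOn_cos ⟨le_rfl, hπ.le⟩ hmem (by linarith)
  have hc2 : Real.cos π < Real.cos (2 * φ) :=
    Real.strictAntiOn_cos hmem ⟨hπ.le, le_rfl⟩ (by linarith)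
  rw [Real.cos_zero] at hc1
  rw [Real.cos_pi] at hc2
  constructor <;>
    nlinarith [mul_pos (mul_pos ha hb) (show (0:ℝ) < 1 + Real.cos (2 * φ) by linarith),
      mul_pos (mul_pos ha hb) (show (0:ℝ) < 1 - Real.cos (2 * φ) by linarith)]

lemma gap_mem (ha : 0 < a) (hb : 0 < b) {φ : ℝ} (hφ : φ ∈ Ioo 0 (π / 2)) :
    gapFun a b φ ∈ Ioo |a - b| (a + b) := by
  obtain ⟨h1, h2⟩ := u_bounds ha hb hφ
  have h0 : (0:ℝ) ≤ (a - b) ^ 2 := sq_nonneg _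
  constructor
  · have := Real.sqrt_lt_sqrt h0 h1
    rwa [Real.sqrt_sq_eq_abs] at this
  · have := Real.sqrt_lt_sqrt (by linarith) h2
    rwa [Real.sqrt_sq (by linarith : (0:ℝ) ≤ a + b)] at this

lemma gap_anti (ha : 0 < a) (hb : 0 < b) : StrictAntiOn (gapFun a b) (Icc 0 (π / 2)) := by
  intro x hx y hy hxy
  have hπ := Real.pi_pos
  have hc : Real.cos (2 * y) < Real.cos (2 * x) :=
    Real.strictAntiOn_cos ⟨by linarith [hx.1], by linarith [hx.2]⟩
      ⟨by linarith [hy.1], by linarith [hy.2]⟩ (by linarith)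
  have hcy : -1 ≤ Real.cos (2 * y) := Real.neg_one_le_cos _
  unfold gapFun
  apply Real.sqrt_lt_sqrt
  · nlinarith [mul_nonneg (mul_pos ha hb).le (show (0:ℝ) ≤ 1 + Real.cos (2 * y) by linarith),
      sq_nonneg (a - b)]
  · nlinarith [mul_pos (mul_pos ha hb) (sub_pos.2 hc)]

lemma gap_image (ha : 0 < a) (hb : 0 < b) :
    gapFun a b '' (Ioo 0 (π / 2)) = Ioo |a - b| (a + b) := by
  apply Subset.antisymm
  · rintro _ ⟨φ, hφ, rfl⟩
    exact gap_mem ha hb hφ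
  · rintro t ⟨ht1, ht2⟩
    have hπ := Real.pi_pos
    have hab : (0:ℝ) < 2 * a * b := by positivity
    have habs : (0:ℝ) ≤ |a - b| := abs_nonneg _
    have ht0 : 0 < t := lt_of_le_of_lt habs ht1
    have h1 : (a - b) ^ 2 < t ^ 2 := by
      have h := sq_abs (a - b)
      nlinarith [mul_pos (sub_pos.2 ht1) (show (0:ℝ) < t + |a - b| by linarith)]
    have h2 : t ^ 2 < (a + b) ^ 2 := by nlinarith
    set p : ℝ := (t ^ 2 - a ^ 2 - b ^ 2) / (2 * a * b) with hp
    have hp1 : -1 < p := by rw [hp, lt_div_iff₀ hab]; nlinarith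
    have hp2 : p < 1 := by rw [hp, div_lt_one hab]; nlinarith
    refine ⟨Real.arccos p / 2, ⟨?_, ?_⟩, ?_⟩
    · have := Real.arccos_pos.2 hp2; linarith
    · have h := Real.neg_pi_div_two_lt_arcsin.2 hp1
      show (π / 2 - Real.arcsin p) / 2 < π / 2
      linarith
    · unfold gapFun
      rw [show 2 * (Real.arccos p / 2) = Real.arccos p by ring,
        Real.cos_arccos hp1.le hp2.le]
      have : a ^ 2 + b ^ 2 + 2 * a * b * p = t ^ 2 := by
        rw [hp]; field_simp; ring
      rw [this, Real.sqrt_sq ht0.le]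

lemma gap_hasDeriv (ha : 0 < a) (hb : 0 < b) {φ : ℝ} (hφ : φ ∈ Ioo 0 (π / 2)) :
    HasDerivAt (gapFun a b) (-(4 * a * b * Real.sin (2 * φ)) / (2 * gapFun a b φ)) φ := by
  have hu : HasDerivAt (fun φ : ℝ => a ^ 2 + b ^ 2 + 2 * a * b * Real.cos (2 * φ))
      (-(4 * a * b * Real.sin (2 * φ))) φ := by
    have h1 : HasDerivAt (fun φ : ℝ => 2 * φ) 2 φ := by
      simpa using (hasDerivAt_id φ).const_mul (2:ℝ)
    have h2 : HasDerivAt (fun φ : ℝ => Real.cos (2 * φ)) (-Real.sin (2 * φ) * 2) φ :=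
      (Real.hasDerivAt_cos (2 * φ)).comp φ h1
    have h3 := (h2.const_mul (2 * a * b)).const_add (a ^ 2 + b ^ 2)
    rw [show -(4 * a * b * Real.sin (2 * φ)) = 2 * a * b * (-Real.sin (2 * φ) * 2) by ring]
    exact h3
  have hne : a ^ 2 + b ^ 2 + 2 * a * b * Real.cos (2 * φ) ≠ 0 := by
    have := (u_bounds ha hb hφ).1
    nlinarith [sq_nonneg (a - b)]
  exact hu.sqrt hne

lemma gap_pos (ha : 0 < a) (hb : 0 < b) {φ : ℝ} (hφ : φ ∈ Ioo 0 (π / 2)) :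
    0 < gapFun a b φ :=
  lt_of_le_of_lt (abs_nonneg _) (gap_mem ha hb hφ).1

lemma gap_sq (ha : 0 < a) (hb : 0 < b) {φ : ℝ} (hφ : φ ∈ Ioo 0 (π / 2)) :
    (gapFun a b φ) ^ 2 = a ^ 2 + b ^ 2 + 2 * a * b * Real.cos (2 * φ) := by
  apply Real.sq_sqrt
  have := (u_bounds ha hb hφ).1
  nlinarith [sq_nonneg (a - b)]

lemma density_eq (ha : 0 < a) (hb : 0 < b) {φ : ℝ} (hφ : φ ∈ Ioo 0 (π / 2)) :
    |(-(4 * a * b * Real.sin (2 * φ)) / (2 * gapFun a b φ))| *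
      ((2 * gapFun a b φ / π) *
        (((a + b) ^ 2 - (gapFun a b φ) ^ 2) * ((gapFun a b φ) ^ 2 - (a - b) ^ 2))
          ^ (-(1 / 2 : ℝ))) = 2 / π := by
  have hπ := Real.pi_pos
  have hs : 0 < Real.sin (2 * φ) :=
    Real.sin_pos_of_pos_of_lt_pi (by linarith [hφ.1]) (by linarith [hφ.2])
  have ht : 0 < gapFun a b φ := gap_pos ha hb hφ
  have hsq := gap_sq ha hb hφ
  have hX : ((a + b) ^ 2 - (gapFun a b φ) ^ 2) * ((gapFun a b φ) ^ 2 - (a - b) ^ 2)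
      = (2 * a * b * Real.sin (2 * φ)) ^ 2 := by
    rw [hsq]
    have h := Real.sin_sq_add_cos_sq (2 * φ)
    linear_combination (-(4 * a ^ 2 * b ^ 2 : ℝ)) * h
  have hpos : (0:ℝ) < 2 * a * b * Real.sin (2 * φ) := by positivity
  have hr : ((2 * a * b * Real.sin (2 * φ)) ^ 2 : ℝ) ^ (-(1 / 2 : ℝ))
      = (2 * a * b * Real.sin (2 * φ))⁻¹ := by
    rw [Real.rpow_neg (sq_nonneg _), ← Real.sqrt_eq_rpow, Real.sqrt_sq hpos.le]
  rw [hX, hr, abs_div, abs_neg,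
    abs_of_pos (show (0:ℝ) < 4 * a * b * Real.sin (2 * φ) by positivity),
    abs_of_pos (show (0:ℝ) < 2 * gapFun a b φ by positivity)]
  field_simp
  ring

lemma gap_continuous (a b : ℝ) : Continuous (gapFun a b) := by
  unfold gapFun
  fun_prop

lemma map_withDensity_aux {g : ℝ → ℝ} (hg : Measurable g) {f : ℝ → ℝ≥0∞}
    (hf : Measurable f) (μ : Measure ℝ) :
    (Measure.map g μ).withDensity f = Measure.map g (μ.withDensity (fun x => f (g x))) := by
  ext s hs
  rw [withDensity_apply _ hs, Measure.map_apply hg hs, withDensity_apply _ (hg hs),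
    setLIntegral_map hs hf hg]

end GapAux

open GapAux

/-- For `a, b > 0`, the pushforward of the uniform measure on `[0, 2π)` under `Ψ`
has density `f(t) = (2t/π)·(((a+b)² − t²)·(t² − (a−b)²))^{−1/2}` on the open interval
`(|a − b|, a + b)` and `0` outside, with respect to Lebesgue measure on `ℝ`. -/
theorem gap_pushforward_density (a b : ℝ) (ha : 0 < a) (hb : 0 < b) :
    Measure.map (gapFun a b) uniformMeasure
      = volume.withDensity (fun t : ℝ =>
          if t ∈ Set.Ioo |a - b| (a + b) then
            ENNReal.ofReal ((2 * t / Real.pi) *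
              (((a + b) ^ 2 - t ^ 2) * (t ^ 2 - (a - b) ^ 2)) ^ (-(1 / 2 : ℝ)))
          else 0) := by
  have hπ := Real.pi_pos
  have hmeas : Measurable (gapFun a b) := (gap_continuous a b).measurable
  set S : Set ℝ := Ioo 0 (π / 2) with hS
  set f₀ : ℝ → ℝ≥0∞ := fun t => ENNReal.ofReal ((2 * t / Real.pi) *
    (((a + b) ^ 2 - t ^ 2) * (t ^ 2 - (a - b) ^ 2)) ^ (-(1 / 2 : ℝ))) with hf₀
  have hf₀m : Measurable f₀ := by
    rw [hf₀]
    apply Measurable.ennreal_ofReal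
    exact (show Measurable fun t : ℝ => 2 * t / Real.pi by fun_prop).mul
      (((measurable_const.sub (measurable_id.pow_const 2)).mul
        ((measurable_id.pow_const 2).sub measurable_const)).pow measurable_const)
  set D : ℝ → ℝ := fun φ => -(4 * a * b * Real.sin (2 * φ)) / (2 * gapFun a b φ) with hD
  have hDm : Measurable (fun φ => ENNReal.ofReal |D φ|) := by
    apply Measurable.ennreal_ofReal
    apply Measurable.abs
    exact (show Measurable fun φ : ℝ => -(4 * a * b * Real.sin (2 * φ)) by fun_prop).div
      (measurable_const.mul hmeas)
  -- Step A: Jacobian change of variables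
  have hinj : InjOn (gapFun a b) S :=
    ((gap_anti ha hb).injOn).mono Ioo_subset_Icc_self
  have hjac : Measure.map (gapFun a b)
      ((volume.restrict S).withDensity (fun φ => ENNReal.ofReal |D φ|))
      = volume.restrict (Ioo |a - b| (a + b)) := by
    rw [← gap_image ha hb]
    have h := map_withDensity_abs_det_fderiv_eq_addHaar (volume)
      (measurableSet_Ioo : MeasurableSet S).nullMeasurableSet
      (f' := fun x => (1 : ℝ →L[ℝ] ℝ).smulRight (D x))
      (fun x hx => ((gap_hasDeriv ha hb hx).hasDerivWithinAt).hasFDerivWithinAt)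
      hinj
    simpa [ContinuousLinearMap.det_toSpanSingleton] using h
  -- Step B: add the target density to both sides of the Jacobian identity
  have hB : (volume.restrict (Ioo |a - b| (a + b))).withDensity f₀
      = ENNReal.ofReal (2 / π) • Measure.map (gapFun a b) (volume.restrict S) := by
    rw [← hjac, map_withDensity_aux hmeas hf₀m, ← withDensity_mul _ (g := fun x => f₀ (gapFun a b x)) hDm (hf₀m.comp hmeas)]
    have hae : ((fun φ => ENNReal.ofReal |D φ|) * fun φ => f₀ (gapFun a b φ))
        =ᵐ[volume.restrict S] (fun _ => ENNReal.ofReal (2 / π)) := by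
      refine ae_restrict_of_forall_mem measurableSet_Ioo ?_
      intro φ hφ
      simp only [Pi.mul_apply, hf₀]
      rw [← ENNReal.ofReal_mul (abs_nonneg _)]
      exact congrArg _ (density_eq ha hb hφ)
    rw [withDensity_congr_ae hae, withDensity_const, Measure.map_smul]
  -- Step C: the uniform measure decomposes into four copies of `volume.restrict S`
  have hmp_add : MeasurePreserving (fun x : ℝ => x + π) volume volume :=
    measurePreserving_add_right volume π
  have hmp_sub : MeasurePreserving (fun x : ℝ => π - x) volume volume :=
    Measure.measurePreserving_sub_left volume π
  have hgap_add : (gapFun a b) ∘ (fun x : ℝ => x + π) = gapFun a b := by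
    funext φ
    simp only [Function.comp_apply]
    unfold gapFun
    rw [show 2 * (φ + π) = 2 * φ + 2 * π by ring, Real.cos_add_two_pi]
  have hgap_sub : (gapFun a b) ∘ (fun x : ℝ => π - x) = gapFun a b := by
    funext φ
    simp only [Function.comp_apply]
    unfold gapFun
    rw [show 2 * (π - φ) = 2 * π - 2 * φ by ring, Real.cos_two_pi_sub]
  have hper : Measure.map (gapFun a b) (volume.restrict (Ico π (2 * π)))
      = Measure.map (gapFun a b) (volume.restrict (Ico 0 π)) := by
    have h1 : volume.restrict (Ico π (2 * π))
        = Measure.map (fun x : ℝ => x + π) (volume.restrict (Ico 0 π)) := by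
      conv_lhs => rw [← hmp_add.map_eq]
      rw [Measure.restrict_map hmp_add.measurable measurableSet_Ico]
      congr 1
      rw [preimage_add_const_Ico]
      congr 1 <;> ring_nf
    rw [h1, Measure.map_map hmeas hmp_add.measurable, hgap_add]
  have hrefl : Measure.map (gapFun a b) (volume.restrict (Ico (π / 2) π))
      = Measure.map (gapFun a b) (volume.restrict S) := by
    have h1 : volume.restrict (Ico (π / 2) π)
        = Measure.map (fun x : ℝ => π - x) (volume.restrict (Ioc 0 (π / 2))) := by
      conv_lhs => rw [← hmp_sub.map_eq]
      rw [Measure.restrict_map hmp_sub.measurable measurableSet_Ico]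
      congr 1
      rw [preimage_const_sub_Ico]
      congr 1 <;> ring_nf
    rw [h1, Measure.map_map hmeas hmp_sub.measurable, hgap_sub]
    congr 1
    exact Measure.restrict_congr_set (Ioo_ae_eq_Ioc (μ := volume) (a := 0) (b := π / 2)).symm
  have hS0 : Measure.map (gapFun a b) (volume.restrict (Ico 0 (π / 2)))
      = Measure.map (gapFun a b) (volume.restrict S) := by
    congr 1
    exact Measure.restrict_congr_set (Ioo_ae_eq_Ico (μ := volume) (a := 0) (b := π / 2)).symm
  have hdis1 : Disjoint (Ico (0:ℝ) (π / 2)) (Ico (π / 2) π) := by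
    apply Set.disjoint_left.mpr
    intro x hx hx'
    exact absurd hx'.1 (not_le.2 hx.2)
  have hdis2 : Disjoint (Ico (0:ℝ) π) (Ico π (2 * π)) := by
    apply Set.disjoint_left.mpr
    intro x hx hx'
    exact absurd hx'.1 (not_le.2 hx.2)
  have hsplit1 : volume.restrict (Ico (0:ℝ) π)
      = volume.restrict (Ico 0 (π / 2)) + volume.restrict (Ico (π / 2) π) := by
    rw [← Measure.restrict_union hdis1 measurableSet_Ico,
      Ico_union_Ico_eq_Ico (by linarith) (by linarith)]
  have hsplit2 : volume.restrict (Ico (0:ℝ) (2 * π))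
      = volume.restrict (Ico 0 π) + volume.restrict (Ico π (2 * π)) := by
    rw [← Measure.restrict_union hdis2 measurableSet_Ico,
      Ico_union_Ico_eq_Ico (by linarith) (by linarith)]
  have hhalf : Measure.map (gapFun a b) (volume.restrict (Ico (0:ℝ) π))
      = (2 : ℝ≥0∞) • Measure.map (gapFun a b) (volume.restrict S) := by
    rw [hsplit1, Measure.map_add _ _ hmeas, hrefl, hS0, two_smul]
  have hC : Measure.map (gapFun a b) (volume.restrict (Ico (0:ℝ) (2 * π)))
      = (4 : ℝ≥0∞) • Measure.map (gapFun a b) (volume.restrict S) := by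
    rw [hsplit2, Measure.map_add _ _ hmeas, hper, hhalf,
      show (4 : ℝ≥0∞) = 2 + 2 by norm_num, add_smul]
  -- assemble
  have hind : (fun t : ℝ =>
      if t ∈ Set.Ioo |a - b| (a + b) then
        ENNReal.ofReal ((2 * t / Real.pi) *
          (((a + b) ^ 2 - t ^ 2) * (t ^ 2 - (a - b) ^ 2)) ^ (-(1 / 2 : ℝ)))
      else 0) = (Ioo |a - b| (a + b)).indicator f₀ := by
    funext t
    simp only [Set.indicator_apply, hf₀]
  rw [hind, withDensity_indicator measurableSet_Ioo, hB]
  unfold uniformMeasure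
  rw [Measure.map_smul, hC, smul_smul]
  congr 1
  rw [ENNReal.ofReal_div_of_pos hπ, ENNReal.ofReal_mul (by norm_num : (0:ℝ) ≤ 2),
    ENNReal.ofReal_ofNat]
  rw [ENNReal.mul_inv (Or.inl (by norm_num)) (Or.inl (by norm_num))]
  have h24 : (2 : ℝ≥0∞)⁻¹ * 4 = 2 := by
    rw [show (4 : ℝ≥0∞) = 2 * 2 by norm_num, ← mul_assoc,
      ENNReal.inv_mul_cancel (by norm_num) (by norm_num), one_mul]
  rw [mul_comm ((2:ℝ≥0∞)⁻¹) ((ENNReal.ofReal π)⁻¹), mul_assoc, h24, mul_comm,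
    div_eq_mul_inv]
end

section
/- Let a, b > 0. The pushforward measure Ψ_*μ is not dominated by any bounded multiple of Lebesgue measure: there is no constant M ≥ 0 such that (Ψ_*μ)(S) ≤ M·λ(S) for every Borel set S ⊆ ℝ, where λ is Lebesgue measure. (Equivalently, the Horn probability density for sums of 2×2 real symmetric matrices is unbounded on its support.) -/
open MeasureTheory Real Set

set_option maxHeartbeats 1000000 in
/-- For `a, b > 0`, the pushforward measure `Ψ_*μ` is not dominated by any bounded
multiple of Lebesgue measure: there is no constant `M ≥ 0` with `(Ψ_*μ)(S) ≤ M·λ(S)` for every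
Borel set `S ⊆ ℝ`. -/
theorem gap_density_unbounded (a b : ℝ) (ha : 0 < a) (hb : 0 < b) :
    ¬ ∃ M : ℝ, 0 ≤ M ∧ ∀ S : Set ℝ, MeasurableSet S →
      Measure.map (gapFun a b) uniformMeasure S ≤ ENNReal.ofReal M * volume S := by
  rintro ⟨M, hM, hbound⟩
  have hπ : 0 < Real.pi := Real.pi_pos
  set s : ℝ := a + b with hs
  have hspos : 0 < s := by positivity
  set δ : ℝ := min 1 (s / (16 * Real.pi * (a * b) * (M + 1))) with hδdef
  have hδpos : 0 < δ := lt_min one_pos (by positivity)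
  have hδ1 : δ ≤ 1 := min_le_left _ _
  have hδ2 : δ ≤ s / (16 * Real.pi * (a * b) * (M + 1)) := min_le_right _ _
  have hδ2' : δ * (16 * Real.pi * (a * b) * (M + 1)) ≤ s :=
    (le_div_iff₀ (by positivity)).mp hδ2
  have hssq : s ^ 2 = a ^ 2 + 2 * (a * b) + b ^ 2 := by rw [hs]; ring
  have hδsq : δ ^ 2 ≤ 1 := by nlinarith
  have habpos : 0 < a * b := mul_pos ha hb
  have hLsq : 0 ≤ s ^ 2 - 4 * (a * b) * δ ^ 2 := by
    nlinarith [sq_nonneg (a - b), mul_nonneg habpos.le (sub_nonneg.mpr hδsq)]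
  set L : ℝ := Real.sqrt (s ^ 2 - 4 * (a * b) * δ ^ 2) with hL
  have hLnonneg : 0 ≤ L := Real.sqrt_nonneg _
  have hLsq' : L ^ 2 = s ^ 2 - 4 * (a * b) * δ ^ 2 := Real.sq_sqrt hLsq
  have hLle : L ≤ s := by
    have h := Real.sqrt_le_sqrt (show s ^ 2 - 4 * (a * b) * δ ^ 2 ≤ s ^ 2 by
      nlinarith [mul_nonneg habpos.le (sq_nonneg δ)])
    rwa [Real.sqrt_sq hspos.le] at h
  have hcont : Continuous (gapFun a b) := by
    apply Real.continuous_sqrt.comp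
    fun_prop
  have hmeasS : MeasurableSet (Icc L s) := measurableSet_Icc
  have hmem : ∀ φ ∈ Icc (0 : ℝ) δ, gapFun a b φ ∈ Icc L s := by
    intro φ hφ
    have hφ0 := hφ.1
    have hφδ := hφ.2
    have hcosle : Real.cos (2 * φ) ≤ 1 := Real.cos_le_one _
    have hcosge : 1 - (2 * φ) ^ 2 / 2 ≤ Real.cos (2 * φ) := Real.one_sub_sq_div_two_le_cos
    constructor
    · rw [hL, gapFun]
      apply Real.sqrt_le_sqrt
      have hφsq : φ ^ 2 ≤ δ ^ 2 := by nlinarith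
      nlinarith [mul_nonneg habpos.le (sub_nonneg.mpr hφsq),
        mul_le_mul_of_nonneg_left hcosge (le_of_lt (by positivity : (0:ℝ) < 2 * (a * b)))]
    · have h := Real.sqrt_le_sqrt
        (show a ^ 2 + b ^ 2 + 2 * a * b * Real.cos (2 * φ) ≤ s ^ 2 by
          nlinarith [mul_le_mul_of_nonneg_left hcosle (le_of_lt (by positivity : (0:ℝ) < 2 * (a * b)))])
      rw [Real.sqrt_sq hspos.le] at h
      exact h
  have hmap : Measure.map (gapFun a b) uniformMeasure (Icc L s)
      = uniformMeasure ((gapFun a b) ⁻¹' Icc L s) :=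
    Measure.map_apply hcont.measurable hmeasS
  have hkey := hbound (Icc L s) hmeasS
  rw [hmap] at hkey
  -- lower bound on the uniform measure of the preimage
  have hsub : Ico (0 : ℝ) δ ⊆ (gapFun a b) ⁻¹' Icc L s ∩ Ico 0 (2 * Real.pi) := by
    intro φ hφ
    refine ⟨hmem φ ⟨hφ.1, hφ.2.le⟩, hφ.1, lt_of_lt_of_le hφ.2 ?_⟩
    nlinarith [Real.pi_gt_three]
  have hlow : ENNReal.ofReal δ ≤ (volume.restrict (Ico 0 (2 * Real.pi))) ((gapFun a b) ⁻¹' Icc L s) := by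
    rw [Measure.restrict_apply (hcont.measurable hmeasS)]
    calc ENNReal.ofReal δ = volume (Ico (0 : ℝ) δ) := by rw [Real.volume_Ico]; simp
      _ ≤ _ := measure_mono hsub
  have hlow2 : (ENNReal.ofReal (2 * Real.pi))⁻¹ * ENNReal.ofReal δ
      ≤ uniformMeasure ((gapFun a b) ⁻¹' Icc L s) := by
    rw [uniformMeasure, Measure.smul_apply, smul_eq_mul]
    exact mul_le_mul_right hlow _
  have hchain : ENNReal.ofReal (δ / (2 * Real.pi)) ≤ ENNReal.ofReal (M * (s - L)) := by
    have h1 : ENNReal.ofReal (δ / (2 * Real.pi))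
        = (ENNReal.ofReal (2 * Real.pi))⁻¹ * ENNReal.ofReal δ := by
      rw [ENNReal.ofReal_div_of_pos (by positivity), ENNReal.div_eq_inv_mul]
    rw [h1]
    calc (ENNReal.ofReal (2 * Real.pi))⁻¹ * ENNReal.ofReal δ
        ≤ uniformMeasure ((gapFun a b) ⁻¹' Icc L s) := hlow2
      _ ≤ ENNReal.ofReal M * volume (Icc L s) := hkey
      _ = ENNReal.ofReal (M * (s - L)) := by
          rw [Real.volume_Icc, ← ENNReal.ofReal_mul hM]
  have hreal : δ / (2 * Real.pi) ≤ M * (s - L) :=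
    (ENNReal.ofReal_le_ofReal_iff (by nlinarith)).mp hchain
  -- derive the contradiction
  have hgap : (s - L) * s ≤ 4 * (a * b) * δ ^ 2 := by nlinarith
  have hmul : δ / (2 * Real.pi) * s ≤ M * (4 * (a * b) * δ ^ 2) := by
    calc δ / (2 * Real.pi) * s ≤ M * (s - L) * s := by
          apply mul_le_mul_of_nonneg_right hreal hspos.le
      _ ≤ M * (4 * (a * b) * δ ^ 2) := by nlinarith
  have hds : δ * s / (2 * Real.pi) ≤ M * (4 * (a * b) * δ ^ 2) := by
    calc δ * s / (2 * Real.pi) = δ / (2 * Real.pi) * s := by ring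
      _ ≤ _ := hmul
  have h5 : δ * (δ * (16 * Real.pi * (a * b) * (M + 1))) ≤ δ * s :=
    mul_le_mul_of_nonneg_left hδ2' hδpos.le
  have h6 : δ * s ≤ 2 * Real.pi * (M * (4 * (a * b) * δ ^ 2)) := by
    rw [div_le_iff₀ (by positivity)] at hds
    linarith
  have h7 : 0 < Real.pi * (a * b) * δ ^ 2 := by positivity
  nlinarith [mul_nonneg hM h7.le]
end

section
/- Let A and B be n×n complex Hermitian matrices, C = A + B, and let α, β, γ : {1, …, n} → ℝ be the eigenvalues of A, B, C respectively, counted with multiplicity. Suppose there exists an n×n Hermitian matrix Z with ZA = AZ and ZB = BZ that is not a real scalar multiple of the identity. Then there exist nonempty proper subsets I, J, K ⊆ {1, …, n} with |I| = |J| = |K| such that Σ_{k∈K} γ_k = Σ_{i∈I} α_i + Σ_{j∈J} β_j. (This is the matrix-theoretic core of the singular-locus Proposition: non-analyticities of the Horn density occur only on such hyperplanes.) -/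
open Matrix Polynomial Finset

/-!
Diagonalise `Z` by a unitary. As `A` and `B` commute with `Z`, in the eigenbasis of `Z` the
matrices `A`, `B` and `A + B` are block diagonal along the eigenspaces of `Z`, and since `Z` is not
scalar, the eigenspace of any eigenvalue of `Z` is a nonempty proper block. The characteristic
polynomial of a diagonal block divides that of the whole matrix, so the trace of the block is the
sum of as many eigenvalues of the whole matrix as the block has rows. Additivity of the trace of
the block then gives the relation.
-/

theorem Multiset.exists_le_map_eq_of_le_map {α β : Type*} [DecidableEq α] (f : α → β)
    (t : Multiset β) : ∀ {m : Multiset α}, t ≤ m.map f → ∃ m' ≤ m, m'.map f = t := by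
  induction t using Multiset.induction_on with
  | empty => exact fun {m} _ ↦ ⟨0, Multiset.zero_le m, Multiset.map_zero f⟩
  | cons b t ih =>
    intro m h
    obtain ⟨a, ha, rfl⟩ :=
      Multiset.mem_map.mp (Multiset.mem_of_le h (Multiset.mem_cons_self _ _))
    rw [← Multiset.cons_erase ha, Multiset.map_cons, Multiset.cons_le_cons_iff] at h
    obtain ⟨m', hm', rfl⟩ := ih h
    exact ⟨a ::ₘ m', (Multiset.cons_le_cons a hm').trans_eq (Multiset.cons_erase ha),
      Multiset.map_cons f a m'⟩

theorem Finset.exists_card_eq_sum_eq_of_le_map {ι M : Type*} [DecidableEq ι] [AddCommMonoid M]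
    (f : ι → M) {s : Finset ι} {t : Multiset M} (h : t ≤ s.val.map f) :
    ∃ I ⊆ s, I.card = Multiset.card t ∧ ∑ i ∈ I, f i = t.sum := by
  obtain ⟨m, hm, rfl⟩ := Multiset.exists_le_map_eq_of_le_map f t h
  exact ⟨⟨m, Multiset.nodup_of_le hm s.nodup⟩, Multiset.subset_of_le hm,
    (Multiset.card_map f m).symm, rfl⟩

theorem Finset.nonempty_and_ne_univ_of_card_eq {ι : Type*} [Fintype ι] {p : ι → Prop}
    [DecidablePred p] {s : Finset ι} (hs : s.card = Fintype.card {i // p i}) {i j : ι}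
    (hi : p i) (hj : ¬p j) : s.Nonempty ∧ s ≠ univ :=
  ⟨card_pos.mp (hs ▸ Fintype.card_pos_iff.mpr ⟨⟨i, hi⟩⟩),
    (card_lt_iff_ne_univ s).mp (hs ▸ Fintype.card_subtype_lt hj)⟩

namespace Matrix

variable {m R : Type*} [Fintype m] [DecidableEq m]

theorem exists_finset_trace_eq_sum_of_charpoly_dvd [CommRing R] [IsDomain R]
    {ι : Type*} [Fintype ι] [DecidableEq ι] (N : Matrix m m R) (f : ι → R)
    (h : N.charpoly ∣ ∏ i, (X - C (f i))) :
    ∃ I : Finset ι, I.card = Fintype.card m ∧ N.trace = ∑ i ∈ I, f i := by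
  have hprod : ∏ i, (X - C (f i)) ≠ 0 :=
    (monic_prod_of_monic _ _ fun i _ ↦ monic_X_sub_C (f i)).ne_zero
  have hsplits : N.charpoly.Splits :=
    (Splits.prod fun i _ ↦ Splits.X_sub_C (f i)).of_dvd hprod h
  have hroots : N.charpoly.roots ≤ univ.val.map f := by
    refine (roots.le_of_dvd hprod h).trans_eq ?_
    simp [roots_prod _ _ hprod]
  obtain ⟨I, -, hcard, hsum⟩ := exists_card_eq_sum_eq_of_le_map f hroots
  refine ⟨I, ?_, ?_⟩
  · rw [hcard, ← hsplits.natDegree_eq_card_roots, charpoly_natDegree_eq_dim]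
  · rw [trace_eq_sum_roots_charpoly_of_splits hsplits, hsum]

theorem BlockTriangular.charpoly_toSquareBlock_dvd [CommRing R] {α : Type*} [LinearOrder α]
    {M : Matrix m m R} {b : m → α} (h : M.BlockTriangular b) (a : α) :
    (M.toSquareBlock b a).charpoly ∣ M.charpoly := by
  by_cases ha : a ∈ image b univ
  · rw [h.charpoly]
    exact dvd_prod_of_mem _ ha
  · have : IsEmpty {i // b i = a} := ⟨fun i ↦ ha (i.2 ▸ mem_image_of_mem b (mem_univ i.1))⟩
    rw [charpoly_isEmpty]
    exact one_dvd _

theorem apply_eq_zero_of_commute_diagonal [CommRing R] [NoZeroDivisors R] {d : m → R}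
    {M : Matrix m m R} (h : Commute (diagonal d) M) {i j : m} (hij : d i ≠ d j) :
    M i j = 0 := by
  have hij' : d i * M i j = M i j * d j := by
    simpa only [diagonal_mul, mul_diagonal] using congr_fun₂ h.eq i j
  exact (mul_eq_zero.mp (by linear_combination hij' : (d i - d j) * M i j = 0)).resolve_left
    (sub_ne_zero.mpr hij)

theorem blockTriangular_of_commute_diagonal {𝕜 : Type*} [RCLike 𝕜] {d : m → ℝ}
    {M : Matrix m m 𝕜} (h : Commute (diagonal (RCLike.ofReal ∘ d)) M) : M.BlockTriangular d :=
  fun _ _ hij ↦ apply_eq_zero_of_commute_diagonal h (RCLike.ofReal_injective.ne hij.ne')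

theorem charpoly_conjStarAlgAut [CommRing R] [StarRing R] (u : unitary (Matrix m m R))
    (M : Matrix m m R) : (Unitary.conjStarAlgAut R _ u M).charpoly = M.charpoly := by
  rw [Unitary.conjStarAlgAut_apply, charpoly_mul_comm, ← Matrix.mul_assoc,
    Unitary.coe_star_mul_self, Matrix.one_mul]

theorem IsHermitian.exists_eigenvalues_ne {𝕜 : Type*} [RCLike 𝕜] {A : Matrix m m 𝕜}
    (hA : A.IsHermitian) (h : ∀ c : ℝ, A ≠ (c : 𝕜) • 1) :
    ∃ i j, hA.eigenvalues i ≠ hA.eigenvalues j := by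
  by_contra! hconst
  cases isEmpty_or_nonempty m with
  | inl => exact h 0 (Subsingleton.elim _ _)
  | inr hne =>
    obtain ⟨i₀⟩ := hne
    apply h (hA.eigenvalues i₀)
    have hdiag : diagonal (RCLike.ofReal ∘ hA.eigenvalues) =
        (hA.eigenvalues i₀ : 𝕜) • (1 : Matrix m m 𝕜) := by
      rw [smul_one_eq_diagonal]
      exact congrArg diagonal (funext fun i ↦ congrArg RCLike.ofReal (hconst i i₀))
    conv_lhs => rw [hA.spectral_theorem, hdiag, map_smul, map_one]

namespace IsHermitian

variable {𝕜 : Type*} [RCLike 𝕜] {Z : Matrix m m 𝕜} (hZ : Z.IsHermitian) (μ : ℝ)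

/-- The compression of `M` to the `μ`-eigenspace of `Z`, written in the eigenbasis of `Z`. -/
noncomputable def eigenblock (M : Matrix m m 𝕜) :
    Matrix {i // hZ.eigenvalues i = μ} {i // hZ.eigenvalues i = μ} 𝕜 :=
  (Unitary.conjStarAlgAut 𝕜 _ (star hZ.eigenvectorUnitary) M).toSquareBlock hZ.eigenvalues μ

theorem eigenblock_add (M N : Matrix m m 𝕜) :
    hZ.eigenblock μ (M + N) = hZ.eigenblock μ M + hZ.eigenblock μ N := by
  simp only [eigenblock, map_add]
  rfl

theorem exists_finset_trace_eigenblock_eq_sum {M : Matrix m m 𝕜} (hM : Commute Z M)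
    {ι : Type*} [Fintype ι] [DecidableEq ι] {f : ι → 𝕜}
    (hf : M.charpoly = ∏ i, (X - C (f i))) :
    ∃ I : Finset ι, I.card = Fintype.card {i // hZ.eigenvalues i = μ} ∧
      (hZ.eigenblock μ M).trace = ∑ i ∈ I, f i := by
  have hblock : (Unitary.conjStarAlgAut 𝕜 _ (star hZ.eigenvectorUnitary) M).BlockTriangular
      hZ.eigenvalues :=
    blockTriangular_of_commute_diagonal (hZ.conjStarAlgAut_star_eigenvectorUnitary ▸ hM.map _)
  refine exists_finset_trace_eq_sum_of_charpoly_dvd _ f ?_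
  rw [← hf, ← charpoly_conjStarAlgAut _ M]
  exact hblock.charpoly_toSquareBlock_dvd μ

end IsHermitian

end Matrix

theorem horn_singular_hyperplane_general (n : ℕ) (A B : Matrix (Fin n) (Fin n) ℂ)
    (α β γ : Fin n → ℝ)
    (hα : A.charpoly = ∏ i : Fin n, (X - Polynomial.C ((α i : ℂ))))
    (hβ : B.charpoly = ∏ i : Fin n, (X - Polynomial.C ((β i : ℂ))))
    (hγ : (A + B).charpoly = ∏ i : Fin n, (X - Polynomial.C ((γ i : ℂ))))
    (hZ : ∃ Z : Matrix (Fin n) (Fin n) ℂ, Z.IsHermitian ∧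
      Z * A = A * Z ∧ Z * B = B * Z ∧ ∀ c : ℝ, Z ≠ (c : ℂ) • (1 : Matrix (Fin n) (Fin n) ℂ)) :
    ∃ I J K : Finset (Fin n),
      I.Nonempty ∧ J.Nonempty ∧ K.Nonempty ∧
      I ≠ Finset.univ ∧ J ≠ Finset.univ ∧ K ≠ Finset.univ ∧
      I.card = J.card ∧ J.card = K.card ∧
      ∑ k ∈ K, γ k = ∑ i ∈ I, α i + ∑ j ∈ J, β j := by
  obtain ⟨Z, hZ, hZA, hZB, hZc⟩ := hZ
  obtain ⟨i₀, j₀, hij⟩ := hZ.exists_eigenvalues_ne hZc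
  set μ := hZ.eigenvalues i₀
  have hZAB : Commute Z (A + B) := Commute.add_right hZA hZB
  obtain ⟨I, hI, hIα⟩ := hZ.exists_finset_trace_eigenblock_eq_sum μ hZA hα
  obtain ⟨J, hJ, hJβ⟩ := hZ.exists_finset_trace_eigenblock_eq_sum μ hZB hβ
  obtain ⟨K, hK, hKγ⟩ := hZ.exists_finset_trace_eigenblock_eq_sum μ hZAB hγ
  obtain ⟨hI₀, hI₁⟩ := nonempty_and_ne_univ_of_card_eq hI rfl (Ne.symm hij)
  obtain ⟨hJ₀, hJ₁⟩ := nonempty_and_ne_univ_of_card_eq hJ rfl (Ne.symm hij)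
  obtain ⟨hK₀, hK₁⟩ := nonempty_and_ne_univ_of_card_eq hK rfl (Ne.symm hij)
  refine ⟨I, J, K, hI₀, hJ₀, hK₀, hI₁, hJ₁, hK₁, hI.trans hJ.symm, hJ.trans hK.symm,
    ?_⟩
  have htrace := congrArg trace (hZ.eigenblock_add μ A B)
  rw [trace_add, hIα, hJβ, hKγ] at htrace
  exact_mod_cast htrace

/-- Let `A, B` be `n×n` complex Hermitian matrices, `C = A + B`, with eigenvalues
`α, β, γ` counted with multiplicity (expressed via factorizations of the characteristic
polynomials). If some Hermitian `Z` commutes with both `A` and `B` and is not a real scalar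
multiple of the identity, then there are nonempty proper subsets `I, J, K ⊆ {1, …, n}` of equal
cardinality with `Σ_{k∈K} γ_k = Σ_{i∈I} α_i + Σ_{j∈J} β_j`. -/
theorem horn_singular_hyperplane (n : ℕ) (A B : Matrix (Fin n) (Fin n) ℂ)
    (hA : A.IsHermitian) (hB : B.IsHermitian)
    (α β γ : Fin n → ℝ)
    (hα : A.charpoly = ∏ i : Fin n, (X - Polynomial.C ((α i : ℂ))))
    (hβ : B.charpoly = ∏ i : Fin n, (X - Polynomial.C ((β i : ℂ))))
    (hγ : (A + B).charpoly = ∏ i : Fin n, (X - Polynomial.C ((γ i : ℂ))))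
    (hZ : ∃ Z : Matrix (Fin n) (Fin n) ℂ, Z.IsHermitian ∧
      Z * A = A * Z ∧ Z * B = B * Z ∧ ∀ c : ℝ, Z ≠ (c : ℂ) • (1 : Matrix (Fin n) (Fin n) ℂ)) :
    ∃ I J K : Finset (Fin n),
      I.Nonempty ∧ J.Nonempty ∧ K.Nonempty ∧
      I ≠ Finset.univ ∧ J ≠ Finset.univ ∧ K ≠ Finset.univ ∧
      I.card = J.card ∧ J.card = K.card ∧
      ∑ k ∈ K, γ k = ∑ i ∈ I, α i + ∑ j ∈ J, β j :=
  horn_singular_hyperplane_general n A B α β γ hα hβ hγ hZ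
end

section
/- Let d ≥ 1 and let P ⊆ ℝ^d be a compact convex set with nonempty interior. Suppose there exist functions a₀, a₁, …, a_d : ℕ → ℝ, each periodic (for each k there is p_k ≥ 1 with a_k(s + p_k) = a_k(s) for all s), such that for every integer s ≥ 1 the number of points of ℤ^d in the dilate s·P equals Σ_{k=0}^{d} a_k(s)·s^k. Then the leading coefficient a_d is a constant function, and its value equals the Lebesgue volume of P. -/
open Set Pointwise MeasureTheory Filter

namespace EhrhartAux


variable {d : ℕ}



/-- half-open unit cube with corner at integer point `m` -/
def cube (m : Fin d → ℤ) : Set (Fin d → ℝ) :=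
  Set.pi Set.univ fun i => Set.Ico (m i : ℝ) (m i + 1)

lemma mem_cube_iff {m : Fin d → ℤ} {y : Fin d → ℝ} :
    y ∈ cube m ↔ ∀ i, ⌊y i⌋ = m i := by
  simp only [cube, Set.mem_pi, Set.mem_univ, forall_true_left, Set.mem_Ico]
  refine forall_congr' fun i => ?_
  rw [Int.floor_eq_iff]

lemma measurableSet_cube (m : Fin d → ℤ) : MeasurableSet (cube m) :=
  MeasurableSet.univ_pi fun _ => measurableSet_Ico

lemma volume_cube (m : Fin d → ℤ) : volume (cube m) = 1 := by
  rw [cube, volume_pi_pi]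
  simp

lemma cube_disjoint {m m' : Fin d → ℤ} (h : m ≠ m') : Disjoint (cube m) (cube m') := by
  rw [Set.disjoint_left]
  intro y hy hy'
  rw [mem_cube_iff] at hy hy'
  exact h (funext fun i => (hy i).symm.trans (hy' i))

lemma floor_mem_cube (y : Fin d → ℝ) : y ∈ cube (fun i => ⌊y i⌋) := by
  rw [mem_cube_iff]; intro i; rfl

lemma volume_biUnion_cube {S : Set (Fin d → ℤ)} (hS : S.Finite) :
    volume (⋃ m ∈ S, cube m) = S.ncard := by
  have : ⋃ m ∈ S, cube m = ⋃ m ∈ hS.toFinset, cube m := by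
    simp [Set.Finite.mem_toFinset]
  rw [this, measure_biUnion_finset ?_ (fun m _ => measurableSet_cube m)]
  · simp only [volume_cube, Finset.sum_const, nsmul_eq_mul, mul_one]
    rw [Set.ncard_eq_toFinset_card S hS]
  · intro m hm m' hm' hne
    exact cube_disjoint hne




lemma combo {P : Set (Fin d → ℝ)} (hP : Convex ℝ P) {p q : Fin d → ℝ}
    (hp : p ∈ P) (hq : q ∈ P) {t₁ t₂ : ℝ} (h1 : 0 ≤ t₁) (h2 : 0 ≤ t₂) :
    t₁ • p + t₂ • q ∈ (t₁ + t₂) • P := by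
  rw [hP.add_smul h1 h2]
  exact Set.add_mem_add (smul_mem_smul_set hp) (smul_mem_smul_set hq)

def latticeIn (P : Set (Fin d → ℝ)) (s : ℕ) : Set (Fin d → ℤ) :=
  {m : Fin d → ℤ | (fun i => (m i : ℝ)) ∈ ((s : ℕ) : ℝ) • P}

lemma upper_incl {P : Set (Fin d → ℝ)} (hP : Convex ℝ P) {z : Fin d → ℝ} {ε : ℝ}
    (hε : 0 < ε) (hball : Metric.closedBall z ε ⊆ P) (s : ℕ) :
    (⋃ m ∈ latticeIn P s, cube m) ⊆ ((-(1/ε)) • z) +ᵥ ((((s:ℝ) + 1/ε)) • P) := by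
  set c : ℝ := 1/ε with hc
  have hc0 : 0 < c := by positivity
  intro y hy
  simp only [Set.mem_iUnion, exists_prop] at hy
  obtain ⟨m, hm, hym⟩ := hy
  -- x := integer point, w := y - x with coords in [0,1)
  set x : Fin d → ℝ := fun i => (m i : ℝ) with hx
  obtain ⟨p, hp, hxp⟩ := hm
  have hw : ‖y - x‖ ≤ 1 := by
    apply pi_norm_le_iff_of_nonneg zero_le_one |>.2
    intro i
    have := hym i (Set.mem_univ i)
    rw [Set.mem_Ico] at this
    rw [Real.norm_eq_abs, abs_le]
    constructor <;> simp only [Pi.sub_apply, hx] <;> linarith [this.1, this.2]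
  have hb : z + c⁻¹ • (y - x) ∈ P := by
    apply hball
    rw [Metric.mem_closedBall, dist_eq_norm]
    have : z + c⁻¹ • (y - x) - z = c⁻¹ • (y - x) := by abel
    rw [this, norm_smul, Real.norm_eq_abs, abs_of_pos (by positivity)]
    calc c⁻¹ * ‖y - x‖ ≤ c⁻¹ * 1 := by
          apply mul_le_mul_of_nonneg_left hw (by positivity)
      _ = ε := by rw [mul_one, hc]; simp
  have key : (s : ℝ) • p + c • (z + c⁻¹ • (y - x)) ∈ ((s:ℝ) + c) • P :=
    combo hP hp hb (Nat.cast_nonneg s) hc0.le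
  have heq : (s : ℝ) • p + c • (z + c⁻¹ • (y - x)) = y + c • z := by
    rw [smul_add, smul_smul, mul_inv_cancel₀ hc0.ne', one_smul,
      show ((s:ℝ) • p = x) from hxp]
    abel
  rw [heq] at key
  rw [Set.mem_vadd_set]
  refine ⟨y + c • z, key, ?_⟩
  simp only [vadd_eq_add, neg_smul]
  abel

lemma lower_incl {P : Set (Fin d → ℝ)} (hP : Convex ℝ P) {z : Fin d → ℝ} {ε : ℝ}
    (hε : 0 < ε) (hball : Metric.closedBall z ε ⊆ P) {s : ℕ} (hs : 1/ε < (s:ℝ)) :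
    (((1/ε) • z) +ᵥ ((((s:ℝ) - 1/ε)) • P)) ⊆ ⋃ m ∈ latticeIn P s, cube m := by
  set c : ℝ := 1/ε with hc
  have hc0 : 0 < c := by positivity
  rintro y ⟨u, hu, rfl⟩
  obtain ⟨p, hp, rfl⟩ := hu
  set y := c • z +ᵥ ((s:ℝ) - c) • p with hy
  set m : Fin d → ℤ := fun i => ⌊y i⌋ with hm
  simp only [Set.mem_iUnion, exists_prop]
  refine ⟨m, ?_, ?_⟩
  · -- m ∈ latticeIn P s
    set x : Fin d → ℝ := fun i => (m i : ℝ) with hx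
    have hw : ‖x - y‖ ≤ 1 := by
      apply pi_norm_le_iff_of_nonneg zero_le_one |>.2
      intro i
      rw [Real.norm_eq_abs, abs_le]
      have h1 : (⌊y i⌋ : ℝ) ≤ y i := Int.floor_le _
      have h2 : y i < ⌊y i⌋ + 1 := Int.lt_floor_add_one _
      constructor <;> simp only [Pi.sub_apply, hx, hm] <;> linarith
    have hb : z + c⁻¹ • (x - y) ∈ P := by
      apply hball
      rw [Metric.mem_closedBall, dist_eq_norm]
      have : z + c⁻¹ • (x - y) - z = c⁻¹ • (x - y) := by abel
      rw [this, norm_smul, Real.norm_eq_abs, abs_of_pos (by positivity)]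
      calc c⁻¹ * ‖x - y‖ ≤ c⁻¹ * 1 := by
            apply mul_le_mul_of_nonneg_left hw (by positivity)
        _ = ε := by rw [mul_one, hc]; simp
    have key : ((s:ℝ) - c) • p + c • (z + c⁻¹ • (x - y)) ∈ (((s:ℝ) - c) + c) • P :=
      combo hP hp hb (by linarith) hc0.le
    have heq : ((s:ℝ) - c) • p + c • (z + c⁻¹ • (x - y)) = x := by
      rw [smul_add, smul_smul, mul_inv_cancel₀ hc0.ne', one_smul, hy]
      simp only [vadd_eq_add]
      abel
    rw [heq] at key
    have : ((s:ℝ) - c) + c = (s:ℝ) := by ring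
    rw [this] at key
    exact key
  · -- y ∈ cube m
    intro i _
    exact Set.mem_Ico.2 ⟨Int.floor_le _, Int.lt_floor_add_one _⟩



lemma latticeIn_finite {P : Set (Fin d → ℝ)} (hPcomp : IsCompact P) (s : ℕ) :
    (latticeIn P s).Finite := by
  have hbdd : Bornology.IsBounded (((s:ℕ):ℝ) • P) := hPcomp.isBounded.smul₀ _
  obtain ⟨R, hR⟩ := hbdd.exists_norm_le
  apply Set.Finite.subset (Set.Finite.pi (fun i : Fin d => Set.finite_Icc (-⌈R⌉) ⌈R⌉))
  intro m hm
  intro i _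
  have h2 : ‖(fun i => (m i : ℝ))‖ ≤ R := hR _ hm
  have h3 : |(m i : ℝ)| ≤ R := by
    have h1 := norm_le_pi_norm (G := fun _ : Fin d => ℝ) (fun i => (m i : ℝ)) i
    simp only [Real.norm_eq_abs] at h1
    exact h1.trans h2
  have h4 : ((|m i| : ℤ) : ℝ) ≤ (⌈R⌉ : ℝ) := by
    rw [Int.cast_abs]
    exact h3.trans (Int.le_ceil R)
  have h5 : |m i| ≤ ⌈R⌉ := Int.cast_le.1 h4
  exact Set.mem_Icc.2 (abs_le.1 h5)

lemma volume_vadd_smul (v : Fin d → ℝ) (t : ℝ) (P : Set (Fin d → ℝ)) :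
    volume (v +ᵥ t • P) = ENNReal.ofReal (|t| ^ d) * volume P := by
  rw [measure_vadd (μ := volume) v _, Measure.addHaar_smul]
  simp


lemma ncard_bounds {P : Set (Fin d → ℝ)} (hPcomp : IsCompact P) (hPconv : Convex ℝ P)
    {z : Fin d → ℝ} {ε : ℝ} (hε : 0 < ε) (hball : Metric.closedBall z ε ⊆ P)
    {s : ℕ} (hs : 1/ε < (s:ℝ)) :
    ((s:ℝ) - 1/ε) ^ d * (volume P).toReal ≤ ((latticeIn P s).ncard : ℝ)
      ∧ ((latticeIn P s).ncard : ℝ) ≤ ((s:ℝ) + 1/ε) ^ d * (volume P).toReal := by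
  set c : ℝ := 1/ε with hc
  have hc0 : 0 < c := by positivity
  have hfin := latticeIn_finite hPcomp (s := s)
  have hU : volume (⋃ m ∈ latticeIn P s, cube m)
      ≤ ENNReal.ofReal (((s:ℝ) + c) ^ d) * volume P := by
    calc volume (⋃ m ∈ latticeIn P s, cube m)
        ≤ volume (((-(1/ε)) • z) +ᵥ ((((s:ℝ) + 1/ε)) • P)) :=
          measure_mono (upper_incl hPconv hε hball s)
      _ = ENNReal.ofReal (((s:ℝ) + c) ^ d) * volume P := by
          rw [volume_vadd_smul, abs_of_pos (by positivity)]
  have hL : ENNReal.ofReal (((s:ℝ) - c) ^ d) * volume P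
      ≤ volume (⋃ m ∈ latticeIn P s, cube m) := by
    calc ENNReal.ofReal (((s:ℝ) - c) ^ d) * volume P
        = volume (((1/ε) • z) +ᵥ ((((s:ℝ) - 1/ε)) • P)) := by
          rw [volume_vadd_smul, abs_of_pos (by linarith)]
      _ ≤ volume (⋃ m ∈ latticeIn P s, cube m) :=
          measure_mono (lower_incl hPconv hε hball hs)
  rw [volume_biUnion_cube hfin] at hU hL
  have hPfin : volume P ≠ ⊤ := hPcomp.measure_lt_top.ne
  constructor
  · have := ENNReal.toReal_mono (by simp) hL
    rwa [ENNReal.toReal_mul, ENNReal.toReal_ofReal (pow_nonneg (by linarith) d), ENNReal.toReal_natCast] at this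
  · have := ENNReal.toReal_mono (ENNReal.mul_ne_top ENNReal.ofReal_ne_top hPfin) hU
    rwa [ENNReal.toReal_mul, ENNReal.toReal_ofReal (by positivity), ENNReal.toReal_natCast] at this

lemma tendsto_count {P : Set (Fin d → ℝ)} (hPcomp : IsCompact P) (hPconv : Convex ℝ P)
    {z : Fin d → ℝ} {ε : ℝ} (hε : 0 < ε) (hball : Metric.closedBall z ε ⊆ P) :
    Tendsto (fun s : ℕ => ((latticeIn P s).ncard : ℝ) / (s:ℝ) ^ d) atTop
      (nhds (volume P).toReal) := by
  set c : ℝ := 1/ε with hc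
  have hc0 : 0 < c := by positivity
  set V : ℝ := (volume P).toReal with hV
  have hlim_lo : Tendsto (fun s : ℕ => (((s:ℝ) - c)/(s:ℝ)) ^ d * V) atTop (nhds V) := by
    have h1 : Tendsto (fun s : ℕ => ((s:ℝ) - c)/(s:ℝ)) atTop (nhds 1) := by
      have h2 : Tendsto (fun s : ℕ => 1 - c/(s:ℝ)) atTop (nhds (1 - 0)) :=
        tendsto_const_nhds.sub (tendsto_const_div_atTop_nhds_zero_nat c)
      rw [sub_zero] at h2
      apply h2.congr'
      filter_upwards [eventually_ge_atTop 1] with s hs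
      have : (s:ℝ) ≠ 0 := by positivity
      field_simp
    have := (h1.pow d).mul_const V
    simpa using this
  have hlim_hi : Tendsto (fun s : ℕ => (((s:ℝ) + c)/(s:ℝ)) ^ d * V) atTop (nhds V) := by
    have h1 : Tendsto (fun s : ℕ => ((s:ℝ) + c)/(s:ℝ)) atTop (nhds 1) := by
      have h2 : Tendsto (fun s : ℕ => 1 + c/(s:ℝ)) atTop (nhds (1 + 0)) :=
        tendsto_const_nhds.add (tendsto_const_div_atTop_nhds_zero_nat c)
      rw [add_zero] at h2
      apply h2.congr'
      filter_upwards [eventually_ge_atTop 1] with s hs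
      have : (s:ℝ) ≠ 0 := by positivity
      field_simp
    have := (h1.pow d).mul_const V
    simpa using this
  obtain ⟨s₀, hs₀⟩ := exists_nat_gt (1/ε)
  apply tendsto_of_tendsto_of_tendsto_of_le_of_le' hlim_lo hlim_hi
  · filter_upwards [eventually_ge_atTop s₀] with s hs
    have hsc : 1/ε < (s:ℝ) := lt_of_lt_of_le hs₀ (by exact_mod_cast hs)
    have hb := (ncard_bounds hPcomp hPconv hε hball hsc).1
    have hs0 : (0:ℝ) < (s:ℝ) := lt_trans (by positivity) hsc
    have hspos : (0:ℝ) < (s:ℝ)^d := pow_pos hs0 d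
    rw [div_pow, div_mul_eq_mul_div]
    gcongr
  · filter_upwards [eventually_ge_atTop s₀] with s hs
    have hsc : 1/ε < (s:ℝ) := lt_of_lt_of_le hs₀ (by exact_mod_cast hs)
    have hb := (ncard_bounds hPcomp hPconv hε hball hsc).2
    have hs0 : (0:ℝ) < (s:ℝ) := lt_trans (by positivity) hsc
    have hspos : (0:ℝ) < (s:ℝ)^d := pow_pos hs0 d
    rw [div_pow, div_mul_eq_mul_div]
    gcongr

end EhrhartAux

/-- Let `P ⊆ ℝ^d` be compact convex with nonempty interior.  If there are
periodic functions `a₀, …, a_d : ℕ → ℝ` such that for every `s ≥ 1` the number of points of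
`ℤ^d` in `s·P` equals `Σ_{k=0}^{d} a_k(s)·s^k`, then `a_d` is constant and its value is the
Lebesgue volume of `P`. -/
theorem ehrhart_leading_coefficient (d : ℕ) (hd : 1 ≤ d)
    (P : Set (Fin d → ℝ)) (hPcomp : IsCompact P) (hPconv : Convex ℝ P)
    (hPint : (interior P).Nonempty)
    (a : ℕ → ℕ → ℝ)
    (hper : ∀ k ≤ d, ∃ p : ℕ, 1 ≤ p ∧ ∀ s : ℕ, a k (s + p) = a k s)
    (hcount : ∀ s : ℕ, 1 ≤ s →
      (Set.ncard {x : Fin d → ℝ | (∀ i, ∃ m : ℤ, x i = (m : ℝ)) ∧ x ∈ ((s : ℕ) : ℝ) • P} : ℝ)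
        = ∑ k ∈ Finset.range (d + 1), a k s * (s : ℝ) ^ k) :
    (∀ s s' : ℕ, a d s = a d s') ∧ ∀ s : ℕ, a d s = (volume P).toReal := by
  classical
  obtain ⟨z, hz⟩ := hPint
  obtain ⟨ε, hε, hball⟩ : ∃ ε > 0, Metric.closedBall z ε ⊆ P := by
    obtain ⟨ε, hε', hb⟩ := Metric.isOpen_iff.1 isOpen_interior z hz
    refine ⟨ε/2, by positivity, fun y hy => interior_subset (hb ?_)⟩
    rw [Metric.mem_closedBall] at hy
    rw [Metric.mem_ball]
    linarith
  set V : ℝ := (volume P).toReal with hV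
  -- identify the counting set with latticeIn
  have hset : ∀ s : ℕ,
      {x : Fin d → ℝ | (∀ i, ∃ m : ℤ, x i = (m : ℝ)) ∧ x ∈ ((s : ℕ) : ℝ) • P}
        = (fun m : Fin d → ℤ => fun i => (m i : ℝ)) '' (EhrhartAux.latticeIn P s) := by
    intro s
    ext x
    constructor
    · rintro ⟨h1, h2⟩
      have hx : (fun i => (((h1 i).choose : ℤ) : ℝ)) = x :=
        funext fun i => ((h1 i).choose_spec).symm
      refine ⟨fun i => (h1 i).choose, ?_, hx⟩
      show (fun i => (((h1 i).choose : ℤ) : ℝ)) ∈ ((s : ℕ) : ℝ) • P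
      rwa [hx]
    · rintro ⟨m, hm, rfl⟩
      exact ⟨fun i => ⟨m i, rfl⟩, hm⟩
  have hinj : Function.Injective (fun m : Fin d → ℤ => (fun i => (m i : ℝ))) := by
    intro m m' h
    funext i
    have h2 : ((m i : ℤ) : ℝ) = ((m' i : ℤ) : ℝ) := congrFun h i
    exact_mod_cast h2
  set N : ℕ → ℝ := fun s => ((EhrhartAux.latticeIn P s).ncard : ℝ) with hN
  have hcount' : ∀ s : ℕ, 1 ≤ s → N s = ∑ k ∈ Finset.range (d + 1), a k s * (s : ℝ) ^ k := by
    intro s hs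
    rw [← hcount s hs, hN]
    rw [hset s, Set.ncard_image_of_injective _ hinj]
  have tendN : Tendsto (fun s : ℕ => N s / (s:ℝ) ^ d) atTop (nhds V) :=
    EhrhartAux.tendsto_count hPcomp hPconv hε hball
  -- periods
  set q : ℕ → ℕ := fun k => if h : k ≤ d then (hper k h).choose else 1 with hqdef
  have hq1 : ∀ k, 1 ≤ q k := by
    intro k
    by_cases h : k ≤ d
    · simp only [hqdef, dif_pos h]
      exact ((hper k h).choose_spec).1
    · simp [hqdef, dif_neg h]
  have hqper : ∀ k, k ≤ d → ∀ s, a k (s + q k) = a k s := by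
    intro k h s
    simp only [hqdef, dif_pos h]
    exact ((hper k h).choose_spec).2 s
  have hqiter : ∀ k, k ≤ d → ∀ n s, a k (s + n * q k) = a k s := by
    intro k h n
    induction n with
    | zero => simp
    | succ n ih =>
      intro s
      have : s + (n + 1) * q k = (s + n * q k) + q k := by ring
      rw [this, hqper k h, ih]
  set pp : ℕ := ∏ k ∈ Finset.range (d + 1), q k with hppdef
  have hpp1 : 1 ≤ pp := Finset.one_le_prod' fun k _ => hq1 k
  have hppper : ∀ k, k ≤ d → ∀ s n, a k (s + n * pp) = a k s := by
    intro k hk s n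
    have hdvd : q k ∣ pp := Finset.dvd_prod_of_mem q (Finset.mem_range.2 (Nat.lt_succ_of_le hk))
    have : n * pp = (n * (pp / q k)) * q k := by
      rw [mul_assoc, Nat.div_mul_cancel hdvd]
    rw [this]
    exact hqiter k hk _ s
  -- main claim
  have main : ∀ r : ℕ, 1 ≤ r → a d r = V := by
    intro r hr
    set g : ℕ → ℕ := fun n => r + n * pp with hgdef
    have hg : Tendsto g atTop atTop := by
      apply tendsto_atTop_mono (f := id)
      · intro n
        calc n = n * 1 := (mul_one n).symm
          _ ≤ n * pp := Nat.mul_le_mul_left n hpp1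
          _ ≤ r + n * pp := Nat.le_add_left _ _
      · exact tendsto_id
    have hg1 : ∀ n, 1 ≤ g n := fun n => le_trans hr (Nat.le_add_right _ _)
    have limitA : Tendsto (fun n => N (g n) / ((g n : ℕ) : ℝ) ^ d) atTop (nhds V) :=
      tendN.comp hg
    -- rewrite via the polynomial
    have heqfun : ∀ n, N (g n) / ((g n : ℕ) : ℝ) ^ d
        = ∑ k ∈ Finset.range (d + 1), a k r * (((g n : ℕ) : ℝ) ^ k / ((g n : ℕ) : ℝ) ^ d) := by
      intro n
      rw [hcount' (g n) (hg1 n), Finset.sum_div]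
      refine Finset.sum_congr rfl fun k hk => ?_
      have hkd : k ≤ d := Nat.lt_succ_iff.1 (Finset.mem_range.1 hk)
      have hak : a k (g n) = a k r := hppper k hkd r n
      rw [hak, mul_div_assoc]
    have hgpos : ∀ n, (0:ℝ) < ((g n : ℕ) : ℝ) := by
      intro n
      exact_mod_cast Nat.lt_of_lt_of_le Nat.zero_lt_one (hg1 n)
    have hterm : ∀ k ∈ Finset.range (d + 1),
        Tendsto (fun n => a k r * (((g n : ℕ) : ℝ) ^ k / ((g n : ℕ) : ℝ) ^ d)) atTop
          (nhds (if k = d then a d r else 0)) := by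
      intro k hk
      have hkd : k ≤ d := Nat.lt_succ_iff.1 (Finset.mem_range.1 hk)
      rcases eq_or_lt_of_le hkd with rfl | hlt
      · simp only [if_pos rfl]
        have : (fun n => a k r * (((g n : ℕ) : ℝ) ^ k / ((g n : ℕ) : ℝ) ^ k))
            = fun _ => a k r := by
          funext n
          rw [div_self (pow_ne_zero k (hgpos n).ne'), mul_one]
        rw [this]
        exact tendsto_const_nhds
      · rw [if_neg hlt.ne]
        have hfn : ∀ n, ((g n : ℕ) : ℝ) ^ k / ((g n : ℕ) : ℝ) ^ d
            = (((g n : ℕ) : ℝ)⁻¹) ^ (d - k) := by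
          intro n
          have hne : ((g n : ℕ) : ℝ) ≠ 0 := (hgpos n).ne'
          have hsplit : ((g n : ℕ) : ℝ) ^ d = ((g n : ℕ) : ℝ) ^ k * ((g n : ℕ) : ℝ) ^ (d - k) := by
            rw [← pow_add]
            congr 1
            omega
          rw [hsplit]
          field_simp
          rw [← mul_pow, mul_one_div_cancel hne, one_pow]
        have h0 : Tendsto (fun n => (((g n : ℕ) : ℝ))⁻¹) atTop (nhds 0) :=
          tendsto_inv_atTop_zero.comp (tendsto_natCast_atTop_atTop.comp hg)
        have h1 : Tendsto (fun n => ((((g n : ℕ) : ℝ))⁻¹) ^ (d - k)) atTop (nhds 0) := by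
          have := h0.pow (d - k)
          rwa [zero_pow (Nat.sub_ne_zero_of_lt hlt)] at this
        have h2 := h1.const_mul (a k r)
        rw [mul_zero] at h2
        apply h2.congr
        intro n
        rw [hfn n]
    have limitB : Tendsto (fun n => ∑ k ∈ Finset.range (d + 1),
        a k r * (((g n : ℕ) : ℝ) ^ k / ((g n : ℕ) : ℝ) ^ d)) atTop (nhds (a d r)) := by
      have hts := tendsto_finset_sum (Finset.range (d + 1)) hterm
      have hsum : (∑ k ∈ Finset.range (d + 1), (if k = d then a d r else 0)) = a d r := by
        rw [Finset.sum_ite_eq' (Finset.range (d + 1)) d]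
        simp
      rwa [hsum] at hts
    have limitB' : Tendsto (fun n => N (g n) / ((g n : ℕ) : ℝ) ^ d) atTop (nhds (a d r)) := by
      apply limitB.congr
      intro n
      exact (heqfun n).symm
    exact tendsto_nhds_unique limitB' limitA
  have hall : ∀ s : ℕ, a d s = V := by
    intro s
    rcases Nat.eq_zero_or_pos s with rfl | hs
    · have h0 := hqper d le_rfl 0
      rw [Nat.zero_add] at h0
      rw [← h0]
      exact main (q d) (hq1 d)
    · exact main s hs
  exact ⟨fun s s' => (hall s).trans (hall s').symm, hall⟩
end

section
/- Let U ⊆ ℝ^m be a nonempty convex set and L : ℝ^m → ℝ^k a linear map. Then for every y in the relative interior (intrinsic interior) of L(U), the affine dimension of the fiber U ∩ L⁻¹({y}) equals (affine dimension of U) − (affine dimension of L(U)). In particular, the dimension of the fiber is the same for all y in the relative interior of L(U). -/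
/-! A point `y` of the relative interior of `L(U)` is the image of a point `x` of the relative
interior of `U`: with `x₀ ∈ ri U`, continue the segment from `L x₀` to `y` a little beyond `y`
inside `L(U)`, lift its end point to `U`, and take the matching point on the segment back to `x₀`.
Around `x`, `U` contains a neighbourhood of `x` in its affine span, so the fiber through `x` spans
`vectorSpan U ⊓ ker L`; rank–nullity for `L` restricted to `vectorSpan U` gives the count. -/

open Set Module Filter Topology AffineMap

theorem Submodule.finrank_inf_ker {K M N : Type*} [DivisionRing K] [AddCommGroup M] [Module K M]
    [AddCommGroup N] [Module K N] (f : M →ₗ[K] N) (V : Submodule K M) [FiniteDimensional K V] :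
    finrank K ↥(V ⊓ LinearMap.ker f) = finrank K V - finrank K (V.map f) := by
  have hker : (V ⊓ LinearMap.ker f).comap V.subtype = (LinearMap.ker f).comap V.subtype := by
    rw [Submodule.comap_inf, Submodule.comap_subtype_self, top_inf_eq]
  have := (f.domRestrict V).finrank_range_add_finrank_ker
  rw [LinearMap.range_domRestrict, LinearMap.ker_domRestrict, ← hker,
    (Submodule.comapSubtypeEquivOfLe (inf_le_left : V ⊓ LinearMap.ker f ≤ V)).finrank_eq] at this
  omega

theorem mem_intrinsicInterior_iff_eventually {𝕜 E : Type*} [Ring 𝕜] [AddCommGroup E] [Module 𝕜 E]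
    [TopologicalSpace E] {s : Set E} {x : E} :
    x ∈ intrinsicInterior 𝕜 s ↔ x ∈ affineSpan 𝕜 s ∧ ∀ᶠ w in 𝓝[affineSpan 𝕜 s] x, w ∈ s := by
  constructor
  · rintro ⟨y, hy, rfl⟩
    refine ⟨y.2, ?_⟩
    rw [nhdsWithin_eq_map_subtype_coe y.2, eventually_map]
    exact mem_interior_iff_mem_nhds.1 hy
  · rintro ⟨hx, h⟩
    rw [nhdsWithin_eq_map_subtype_coe hx, eventually_map] at h
    exact ⟨⟨x, hx⟩, mem_interior_iff_mem_nhds.2 h, rfl⟩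

section

variable {E : Type*} [AddCommGroup E] [Module ℝ E] [TopologicalSpace E] [IsTopologicalAddGroup E]
  [ContinuousSMul ℝ E] {s : Set E} {x : E}

theorem exists_pos_add_smul_mem_of_mem_intrinsicInterior (hx : x ∈ intrinsicInterior ℝ s)
    {v : E} (hv : v ∈ vectorSpan ℝ s) : ∃ c : ℝ, 0 < c ∧ x + c • v ∈ s := by
  obtain ⟨hxA, hs⟩ := mem_intrinsicInterior_iff_eventually.1 hx
  have hline : Tendsto (fun c : ℝ => x + c • v) (𝓝 0) (𝓝[affineSpan ℝ s] x) := by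
    refine tendsto_nhdsWithin_iff.2 ⟨?_, Eventually.of_forall fun c => ?_⟩
    · exact (by fun_prop : Continuous fun c : ℝ => x + c • v).tendsto' 0 x (by simp)
    · rw [add_comm, ← vadd_eq_add]
      exact AffineSubspace.vadd_mem_of_mem_direction
        (Submodule.smul_mem _ c (direction_affineSpan ℝ s ▸ hv)) hxA
  exact ((hline.eventually hs).filter_mono nhdsWithin_le_nhds |>.and
    (self_mem_nhdsWithin (s := Ioi 0))).exists.imp fun c h => ⟨h.2, h.1⟩

theorem Convex.lineMap_mem_intrinsicInterior (hs : Convex ℝ s) {b : E} (hb : b ∈ s)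
    (hx : x ∈ intrinsicInterior ℝ s) {t : ℝ} (ht₀ : 0 < t) (ht₁ : t ≤ 1) :
    lineMap b x t ∈ intrinsicInterior ℝ s := by
  obtain ⟨hxA, hxs⟩ := mem_intrinsicInterior_iff_eventually.1 hx
  have hbA := subset_affineSpan ℝ s hb
  set h := homothety b t⁻¹
  have hz : h (lineMap b x t) = x := by
    rw [← homothety_eq_lineMap, ← comp_apply, ← homothety_mul, inv_mul_cancel₀ ht₀.ne',
      homothety_one, id_apply]
  have hh : Tendsto h (𝓝[affineSpan ℝ s] lineMap b x t) (𝓝[affineSpan ℝ s] x) := by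
    have hmaps : MapsTo h (affineSpan ℝ s) (affineSpan ℝ s) := fun w hw =>
      homothety_eq_lineMap b t⁻¹ w ▸ AffineMap.lineMap_mem _ hbA hw
    have := ((homothety_continuous b t⁻¹).continuousWithinAt
      (x := lineMap b x t)).tendsto_nhdsWithin hmaps
    rwa [hz] at this
  refine mem_intrinsicInterior_iff_eventually.2 ⟨AffineMap.lineMap_mem t hbA hxA, ?_⟩
  filter_upwards [hh.eventually hxs] with w hw
  have : homothety b t (h w) = w := by
    rw [← comp_apply, ← homothety_mul, mul_inv_cancel₀ ht₀.ne', homothety_one, id_apply]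
  rw [← this, homothety_eq_lineMap]
  exact hs.lineMap_mem hb hw ⟨ht₀.le, ht₁⟩

theorem vectorSpan_inter_preimage_singleton_eq_inf_ker {F : Type*} [AddCommGroup F] [Module ℝ F]
    (f : E →ₗ[ℝ] F) (hx : x ∈ intrinsicInterior ℝ s) :
    vectorSpan ℝ (s ∩ f ⁻¹' {f x}) = vectorSpan ℝ s ⊓ LinearMap.ker f := by
  refine le_antisymm (le_inf (vectorSpan_mono ℝ inter_subset_left) ?_) fun v ⟨hv, hfv⟩ => ?_
  · rw [vectorSpan_def, Submodule.span_le]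
    rintro _ ⟨a, ⟨-, ha⟩, b, ⟨-, hb⟩, rfl⟩
    simp_all [vsub_eq_sub]
  · obtain ⟨c, hc, hxv⟩ := exists_pos_add_smul_mem_of_mem_intrinsicInterior hx hv
    have hfiber : x + c • v ∈ s ∩ f ⁻¹' {f x} := ⟨hxv, by simp [LinearMap.mem_ker.1 hfv]⟩
    have hx' : x ∈ s ∩ f ⁻¹' {f x} := ⟨intrinsicInterior_subset hx, rfl⟩
    have := vsub_mem_vectorSpan ℝ hfiber hx'
    rwa [vsub_eq_sub, add_sub_cancel_left, Submodule.smul_mem_iff _ hc.ne'] at this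

end

theorem Convex.intrinsicInterior_image_subset_image_intrinsicInterior {E F : Type*}
    [NormedAddCommGroup E] [NormedSpace ℝ E] [FiniteDimensional ℝ E]
    [AddCommGroup F] [Module ℝ F] [TopologicalSpace F] [IsTopologicalAddGroup F]
    [ContinuousSMul ℝ F] {s : Set E} (hs : Convex ℝ s) (f : E →ₗ[ℝ] F) :
    intrinsicInterior ℝ (f '' s) ⊆ f '' intrinsicInterior ℝ s := by
  intro y hy
  obtain ⟨x₀, hx₀⟩ : (intrinsicInterior ℝ s).Nonempty :=
    (intrinsicInterior_nonempty hs).2 (image_nonempty.1 ⟨y, intrinsicInterior_subset hy⟩)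
  have hdir : y - f x₀ ∈ vectorSpan ℝ (f '' s) :=
    vsub_mem_vectorSpan ℝ (intrinsicInterior_subset hy)
      (mem_image_of_mem f (intrinsicInterior_subset hx₀))
  obtain ⟨c, hc, x₁, hx₁, hfx₁⟩ := exists_pos_add_smul_mem_of_mem_intrinsicInterior hy hdir
  refine ⟨lineMap x₁ x₀ (c / (1 + c)), hs.lineMap_mem_intrinsicInterior hx₁ hx₀ (by positivity)
    ((div_le_one (by positivity)).2 (by linarith)), ?_⟩
  rw [lineMap_apply_module, map_add, map_smul, map_smul, hfx₁]
  match_scalars <;> field_simp <;> ring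

theorem fiber_dimension_over_relative_interior_general (m k : ℕ)
    (U : Set (Fin m → ℝ)) (hUconv : Convex ℝ U)
    (L : (Fin m → ℝ) →ₗ[ℝ] (Fin k → ℝ)) :
    ∀ y ∈ intrinsicInterior ℝ (L '' U),
      Module.finrank ℝ (vectorSpan ℝ (U ∩ L ⁻¹' {y}))
        = Module.finrank ℝ (vectorSpan ℝ U) - Module.finrank ℝ (vectorSpan ℝ (L '' U)) := by
  intro y hy
  obtain ⟨x, hx, rfl⟩ := hUconv.intrinsicInterior_image_subset_image_intrinsicInterior L hy
  have hspan : vectorSpan ℝ (L '' U) = (vectorSpan ℝ U).map L := by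
    simpa using (L.toAffineMap.map_vectorSpan (s := U)).symm
  rw [vectorSpan_inter_preimage_singleton_eq_inf_ker L hx, hspan]
  exact Submodule.finrank_inf_ker L _

/-- For a nonempty convex `U ⊆ ℝ^m` and a linear map `L : ℝ^m → ℝ^k`, every fiber
over a point `y` in the relative interior of `L(U)` has affine dimension
`dim U − dim L(U)`. -/
theorem fiber_dimension_over_relative_interior (m k : ℕ)
    (U : Set (Fin m → ℝ)) (hU : U.Nonempty) (hUconv : Convex ℝ U)
    (L : (Fin m → ℝ) →ₗ[ℝ] (Fin k → ℝ)) :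
    ∀ y ∈ intrinsicInterior ℝ (L '' U),
      Module.finrank ℝ (vectorSpan ℝ (U ∩ L ⁻¹' {y}))
        = Module.finrank ℝ (vectorSpan ℝ U) - Module.finrank ℝ (vectorSpan ℝ (L '' U)) :=
  fiber_dimension_over_relative_interior_general m k U hUconv L
end

section
/- For every integer s ≥ 0, the number of integer 4-tuples (t₀⁰, t₋₁, t₀, t₁) ∈ ℤ⁴ satisfying: 2t₋₁ ≥ t₀ ≥ 2t₁ ≥ 0; t₀⁰ ≥ 0; t₁ + t₋₁ = 5s; t₀⁰ + t₀ = 7s; 5s ≥ t₁, 5s ≥ t₀ − t₋₁, 5s ≥ t₋₁ − t₀⁰; 6s ≥ t₀⁰; 3s ≥ t₋₁ + 2t₁ − t₀, 3s ≥ t₁; 4s ≥ t₀⁰ + 2(t₀ − t₋₁ − t₁), 4s ≥ t₀ − 2t₁, is equal to 6s² + (7/2)s + (3 + (−1)^s)/4. -/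
/-!
The two equations `t₁ + t₋₁ = 5s` and `t₀⁰ + t₀ = 7s` eliminate `t₋₁` and `t₀⁰`, so the
polytope is a plane polygon in the coordinates `x = t₁`, `y = t₀`: the remaining inequalities
reduce to `0 ≤ x ≤ 3s` and `max (2s + x) (2x) ≤ y ≤ min (4s + 2x) (10s - 2x)`. The length of
the fibre over `x` is affine on each of `[0, 3s/2]`, `[3s/2, 2s]`, `[2s, 5s/2]` and vanishes
beyond `5s/2`, so the count is a sum of arithmetic progressions whose breakpoints depend on the
parity of `s`.
-/

open Finset

namespace BZCount563456

lemma two_mul_sum_Ico_eq_of_affine (f : ℕ → ℤ) (a d : ℤ) {A B : ℕ} (hAB : A ≤ B)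
    (hf : ∀ x ∈ Ico A B, f x = a + d * x) :
    2 * ∑ x ∈ Ico A B, f x = (B - A) * (2 * a + d * (A + B - 1)) := by
  rw [sum_congr rfl hf]
  clear hf
  induction B, hAB using Nat.le_induction with
  | base => simp
  | succ B hAB ih =>
      rw [sum_Ico_succ_top hAB, mul_add, ih]
      push_cast
      ring

def bzPolytope (s : ℕ) : Set (ℤ × ℤ × ℤ × ℤ) :=
  {t : ℤ × ℤ × ℤ × ℤ |
        2 * t.2.1 ≥ t.2.2.1 ∧ t.2.2.1 ≥ 2 * t.2.2.2 ∧ t.2.2.2 ≥ 0 ∧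
        t.1 ≥ 0 ∧
        t.2.2.2 + t.2.1 = 5 * (s : ℤ) ∧
        t.1 + t.2.2.1 = 7 * (s : ℤ) ∧
        5 * (s : ℤ) ≥ t.2.2.2 ∧ 5 * (s : ℤ) ≥ t.2.2.1 - t.2.1 ∧
        5 * (s : ℤ) ≥ t.2.1 - t.1 ∧
        6 * (s : ℤ) ≥ t.1 ∧
        3 * (s : ℤ) ≥ t.2.1 + 2 * t.2.2.2 - t.2.2.1 ∧ 3 * (s : ℤ) ≥ t.2.2.2 ∧
        4 * (s : ℤ) ≥ t.1 + 2 * (t.2.2.1 - t.2.1 - t.2.2.2) ∧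
        4 * (s : ℤ) ≥ t.2.2.1 - 2 * t.2.2.2}

def fiberLower (s x : ℕ) : ℤ := max (2 * s + x) (2 * x)

def fiberUpper (s x : ℕ) : ℤ := min (4 * s + 2 * x) (10 * s - 2 * x)

noncomputable def fiberCard (s x : ℕ) : ℕ := #(Icc (fiberLower s x) (fiberUpper s x))

noncomputable def latticePoints (s : ℕ) : Finset (ℤ × ℤ × ℤ × ℤ) :=
  (range (3 * s + 1)).biUnion fun x =>
    (Icc (fiberLower s x) (fiberUpper s x)).image fun y => (7 * s - y, 5 * s - x, y, x)

lemma bzPolytope_eq_latticePoints (s : ℕ) : bzPolytope s = latticePoints s := by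
  ext ⟨a, b, c, d⟩
  simp only [bzPolytope, latticePoints, fiberLower, fiberUpper, Set.mem_ofPred_eq, coe_biUnion,
    coe_image, coe_Icc, mem_coe, mem_range, Set.mem_iUnion, Set.mem_image, Set.mem_Icc,
    Prod.mk.injEq, exists_prop]
  constructor
  · intro h
    exact ⟨d.toNat, by omega, c, ⟨by omega, by omega⟩, by omega, by omega, rfl, by omega⟩
  · rintro ⟨x, hx, y, ⟨hy₁, hy₂⟩, rfl, rfl, rfl, rfl⟩
    omega

lemma card_latticePoints (s : ℕ) :
    #(latticePoints s) = ∑ x ∈ range (3 * s + 1), fiberCard s x := by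
  rw [latticePoints, card_biUnion]
  · exact sum_congr rfl fun x _ => card_image_of_injective _ fun y₁ y₂ h => by
      simpa using congrArg (fun t => t.2.2.1) h
  · intro x _ x' _ hxx'
    rw [Function.onFun, disjoint_left]
    rintro t ht ht'
    simp only [mem_image] at ht ht'
    obtain ⟨y, -, rfl⟩ := ht
    obtain ⟨y', -, h⟩ := ht'
    exact hxx' (by simpa using (congrArg (fun t => t.2.2.2) h).symm)

lemma natCast_fiberCard (s x : ℕ) :
    (fiberCard s x : ℤ) = (fiberUpper s x + 1 - fiberLower s x).toNat := by
  rw [fiberCard, Int.card_Icc]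

lemma fiberCard_of_two_mul_le_three_mul (s x : ℕ) (h : 2 * x ≤ 3 * s) :
    (fiberCard s x : ℤ) = 2 * s + 1 + x := by
  rw [natCast_fiberCard, fiberLower, fiberUpper]; omega

lemma fiberCard_of_three_mul_lt_two_mul (s x : ℕ) (h₁ : 3 * s < 2 * x) (h₂ : x ≤ 2 * s) :
    (fiberCard s x : ℤ) = 8 * s + 1 - 3 * x := by
  rw [natCast_fiberCard, fiberLower, fiberUpper]; omega

lemma fiberCard_of_two_mul_lt (s x : ℕ) (h₁ : 2 * s < x) (h₂ : 2 * x ≤ 5 * s) :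
    (fiberCard s x : ℤ) = 10 * s + 1 - 4 * x := by
  rw [natCast_fiberCard, fiberLower, fiberUpper]; omega

lemma fiberCard_of_five_mul_lt_two_mul (s x : ℕ) (h : 5 * s < 2 * x) : fiberCard s x = 0 := by
  have : (fiberCard s x : ℤ) = 0 := by rw [natCast_fiberCard, fiberLower, fiberUpper]; omega
  exact_mod_cast this

lemma four_mul_sum_fiberCard (s : ℕ) :
    4 * ∑ x ∈ range (3 * s + 1), (fiberCard s x : ℤ) = 24 * s ^ 2 + 14 * s + 3 + (-1) ^ s := by
  have hm : 3 * s / 2 + 1 ≤ 2 * s + 1 := by omega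
  have hn : 2 * s + 1 ≤ 5 * s / 2 + 1 := by omega
  have hn' : 5 * s / 2 + 1 ≤ 3 * s + 1 := by omega
  have e₁ := two_mul_sum_Ico_eq_of_affine (fun x => fiberCard s x) (2 * s + 1) 1
    (Nat.zero_le (3 * s / 2 + 1)) fun x hx => by
      rw [mem_Ico] at hx
      rw [fiberCard_of_two_mul_le_three_mul s x (by omega)]; ring
  have e₂ := two_mul_sum_Ico_eq_of_affine (fun x => fiberCard s x) (8 * s + 1) (-3) hm
    fun x hx => by
      rw [mem_Ico] at hx
      rw [fiberCard_of_three_mul_lt_two_mul s x (by omega) (by omega)]; ring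
  have e₃ := two_mul_sum_Ico_eq_of_affine (fun x => fiberCard s x) (10 * s + 1) (-4) hn
    fun x hx => by
      rw [mem_Ico] at hx
      rw [fiberCard_of_two_mul_lt s x (by omega) (by omega)]; ring
  have e₄ := two_mul_sum_Ico_eq_of_affine (fun x => fiberCard s x) 0 0 hn' fun x hx => by
      rw [mem_Ico] at hx
      rw [fiberCard_of_five_mul_lt_two_mul s x (by omega)]; ring
  rw [range_eq_Ico, ← sum_Ico_consecutive _ (Nat.zero_le _) (hm.trans (hn.trans hn')),
    ← sum_Ico_consecutive _ hm (hn.trans hn'), ← sum_Ico_consecutive _ hn hn']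
  obtain ⟨k, rfl | rfl⟩ := Nat.even_or_odd' s
  · have hdiv₃ : 3 * (2 * k) / 2 = 3 * k := by omega
    have hdiv₅ : 5 * (2 * k) / 2 = 5 * k := by omega
    simp only [hdiv₃, hdiv₅] at e₁ e₂ e₃ e₄ ⊢
    rw [(even_two_mul k).neg_one_pow]
    push_cast at e₁ e₂ e₃ e₄ ⊢
    linear_combination 2 * (e₁ + e₂ + e₃ + e₄)
  · have hdiv₃ : 3 * (2 * k + 1) / 2 = 3 * k + 1 := by omega
    have hdiv₅ : 5 * (2 * k + 1) / 2 = 5 * k + 2 := by omega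
    simp only [hdiv₃, hdiv₅] at e₁ e₂ e₃ e₄ ⊢
    rw [(odd_two_mul_add_one k).neg_one_pow]
    push_cast at e₁ e₂ e₃ e₄ ⊢
    linear_combination 2 * (e₁ + e₂ + e₃ + e₄)

end BZCount563456

open BZCount563456 in
/-- The number of integer points of the `s`-fold dilate of the
Berenstein–Zelevinsky polytope of `B₂` for `λ = (5,6)`, `μ = (3,4)`, `ν = (5,6)` equals
`6s² + (7/2)s + (3 + (−1)^s)/4`. -/
theorem bz_count_563456 (s : ℕ) :
    (Set.ncard {t : ℤ × ℤ × ℤ × ℤ |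
        2 * t.2.1 ≥ t.2.2.1 ∧ t.2.2.1 ≥ 2 * t.2.2.2 ∧ t.2.2.2 ≥ 0 ∧
        t.1 ≥ 0 ∧
        t.2.2.2 + t.2.1 = 5 * (s : ℤ) ∧
        t.1 + t.2.2.1 = 7 * (s : ℤ) ∧
        5 * (s : ℤ) ≥ t.2.2.2 ∧ 5 * (s : ℤ) ≥ t.2.2.1 - t.2.1 ∧
        5 * (s : ℤ) ≥ t.2.1 - t.1 ∧
        6 * (s : ℤ) ≥ t.1 ∧
        3 * (s : ℤ) ≥ t.2.1 + 2 * t.2.2.2 - t.2.2.1 ∧ 3 * (s : ℤ) ≥ t.2.2.2 ∧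
        4 * (s : ℤ) ≥ t.1 + 2 * (t.2.2.1 - t.2.1 - t.2.2.2) ∧
        4 * (s : ℤ) ≥ t.2.2.1 - 2 * t.2.2.2} : ℝ)
      = 6 * (s : ℝ) ^ 2 + (7 / 2) * (s : ℝ) + (3 + (-1 : ℝ) ^ s) / 4 := by
  change ((bzPolytope s).ncard : ℝ) = _
  rw [bzPolytope_eq_latticePoints, Set.ncard_coe_finset, card_latticePoints]
  have h : (4 : ℝ) * ∑ x ∈ range (3 * s + 1), (fiberCard s x : ℝ)
      = 24 * s ^ 2 + 14 * s + 3 + (-1) ^ s := by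
    exact_mod_cast four_mul_sum_fiberCard s
  push_cast
  linarith
end

section
/- For every integer s ≥ 0, the number of integer 4-tuples (t₀⁰, t₋₁, t₀, t₁) ∈ ℤ⁴ satisfying: 2t₋₁ ≥ t₀ ≥ 2t₁ ≥ 0; t₀⁰ ≥ 0; 2(t₁ + t₋₁) = 3s; t₀⁰ + t₀ = 2s; s ≥ t₁, s ≥ t₀ − t₋₁, s ≥ t₋₁ − t₀⁰; s ≥ t₀⁰; s ≥ t₋₁ + 2t₁ − t₀, s ≥ t₁; s ≥ t₀⁰ + 2(t₀ − t₋₁ − t₁), s ≥ t₀ − 2t₁, equals 0 when s is odd, and equals (3/8)s² + (3/4)s + 1 when s is even. -/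
open Set

private lemma bz_sum_Icc_int_eq_range (n : ℕ) (f : ℤ → ℕ) :
    ∑ a ∈ Finset.Icc (0:ℤ) (n:ℤ), f a = ∑ i ∈ Finset.range (n+1), f (i:ℤ) := by
  have h : Finset.Icc (0:ℤ) (n:ℤ) = (Finset.range (n+1)).image (Nat.cast) := by
    ext x; simp only [Finset.mem_Icc, Finset.mem_image, Finset.mem_range]
    constructor
    · intro hx; exact ⟨x.toNat, by omega, by omega⟩
    · rintro ⟨i, hi, rfl⟩; omega
  rw [h, Finset.sum_image]
  intro x _ y _ hxy; exact_mod_cast hxy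

private lemma bz_sum_range_split (g : ℕ → ℕ) (m n : ℕ) :
    ∑ i ∈ Finset.range (m+n), g i
      = ∑ i ∈ Finset.range m, g i + ∑ j ∈ Finset.range n, g (m+j) := by
  induction n with
  | zero => simp
  | succ k ih => rw [← Nat.add_assoc, Finset.sum_range_succ, Finset.sum_range_succ, ih]; omega

private lemma bz_sumA (M : ℕ) : ∑ i ∈ Finset.range (M+1), (2*(i:ℤ)+1).toNat = (M+1)^2 := by
  induction M with
  | zero => simp
  | succ n ih =>
    rw [Finset.sum_range_succ, ih]
    have h : ((2*((n+1:ℕ):ℤ)+1)).toNat = 2*n+3 := by push_cast; omega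
    rw [h]; ring

private lemma bz_sumB (M : ℕ) :
    2 * (∑ j ∈ Finset.range M, (2*(M:ℤ) - 3 - 4*(j:ℤ)).toNat) + M = M * M := by
  induction M using Nat.twoStepInduction with
  | zero => simp
  | one => simp
  | more n ih _ =>
    have key : ∑ j ∈ Finset.range (n+2), (2*((n+2:ℕ):ℤ) - 3 - 4*(j:ℤ)).toNat
        = (2*n+1) + ∑ j ∈ Finset.range n, (2*(n:ℤ) - 3 - 4*(j:ℤ)).toNat := by
      rw [Finset.sum_range_succ']
      have h1 : ∑ i ∈ Finset.range (n+1), (2*((n+2:ℕ):ℤ) - 3 - 4*((i+1:ℕ):ℤ)).toNat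
          = ∑ i ∈ Finset.range (n+1), (2*(n:ℤ) - 3 - 4*(i:ℤ)).toNat :=
        Finset.sum_congr rfl (fun i _ => by push_cast; omega)
      rw [h1, Finset.sum_range_succ]
      have h2 : (2*(n:ℤ) - 3 - 4*(n:ℤ)).toNat = 0 := by omega
      have h3 : (2*((n+2:ℕ):ℤ) - 3 - 4*((0:ℕ):ℤ)).toNat = 2*n+1 := by push_cast; omega
      rw [h2, h3]; omega
    show 2 * (∑ j ∈ Finset.range (n+2), (2*((n+2:ℕ):ℤ) - 3 - 4*(j:ℤ)).toNat) + (n+2)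
        = (n+2)*(n+2)
    have hr : (n+2)*(n+2) = n*n + 4*n + 4 := by ring
    rw [key, hr]; omega

/-- The number of integer points of the `s`-fold dilate of the
Berenstein–Zelevinsky polytope of `B₂` for `λ = μ = ν = (1,1)` (the Weyl vector) equals `0` for
odd `s` and `(3/8)s² + (3/4)s + 1` for even `s`. -/
theorem bz_count_rho_rho_rho (s : ℕ) :
    (Odd s →
      Set.ncard {t : ℤ × ℤ × ℤ × ℤ |
        2 * t.2.1 ≥ t.2.2.1 ∧ t.2.2.1 ≥ 2 * t.2.2.2 ∧ t.2.2.2 ≥ 0 ∧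
        t.1 ≥ 0 ∧
        2 * (t.2.2.2 + t.2.1) = 3 * (s : ℤ) ∧
        t.1 + t.2.2.1 = 2 * (s : ℤ) ∧
        (s : ℤ) ≥ t.2.2.2 ∧ (s : ℤ) ≥ t.2.2.1 - t.2.1 ∧ (s : ℤ) ≥ t.2.1 - t.1 ∧
        (s : ℤ) ≥ t.1 ∧
        (s : ℤ) ≥ t.2.1 + 2 * t.2.2.2 - t.2.2.1 ∧ (s : ℤ) ≥ t.2.2.2 ∧
        (s : ℤ) ≥ t.1 + 2 * (t.2.2.1 - t.2.1 - t.2.2.2) ∧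
        (s : ℤ) ≥ t.2.2.1 - 2 * t.2.2.2} = 0) ∧
    (Even s →
      (Set.ncard {t : ℤ × ℤ × ℤ × ℤ |
        2 * t.2.1 ≥ t.2.2.1 ∧ t.2.2.1 ≥ 2 * t.2.2.2 ∧ t.2.2.2 ≥ 0 ∧
        t.1 ≥ 0 ∧
        2 * (t.2.2.2 + t.2.1) = 3 * (s : ℤ) ∧
        t.1 + t.2.2.1 = 2 * (s : ℤ) ∧
        (s : ℤ) ≥ t.2.2.2 ∧ (s : ℤ) ≥ t.2.2.1 - t.2.1 ∧ (s : ℤ) ≥ t.2.1 - t.1 ∧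
        (s : ℤ) ≥ t.1 ∧
        (s : ℤ) ≥ t.2.1 + 2 * t.2.2.2 - t.2.2.1 ∧ (s : ℤ) ≥ t.2.2.2 ∧
        (s : ℤ) ≥ t.1 + 2 * (t.2.2.1 - t.2.1 - t.2.2.2) ∧
        (s : ℤ) ≥ t.2.2.1 - 2 * t.2.2.2} : ℝ)
          = (3 / 8) * (s : ℝ) ^ 2 + (3 / 4) * (s : ℝ) + 1) := by
  constructor
  · -- odd case: the set is empty
    intro hodd
    obtain ⟨k, hk⟩ := hodd
    have : {t : ℤ × ℤ × ℤ × ℤ |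
        2 * t.2.1 ≥ t.2.2.1 ∧ t.2.2.1 ≥ 2 * t.2.2.2 ∧ t.2.2.2 ≥ 0 ∧
        t.1 ≥ 0 ∧
        2 * (t.2.2.2 + t.2.1) = 3 * (s : ℤ) ∧
        t.1 + t.2.2.1 = 2 * (s : ℤ) ∧
        (s : ℤ) ≥ t.2.2.2 ∧ (s : ℤ) ≥ t.2.2.1 - t.2.1 ∧ (s : ℤ) ≥ t.2.1 - t.1 ∧
        (s : ℤ) ≥ t.1 ∧
        (s : ℤ) ≥ t.2.1 + 2 * t.2.2.2 - t.2.2.1 ∧ (s : ℤ) ≥ t.2.2.2 ∧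
        (s : ℤ) ≥ t.1 + 2 * (t.2.2.1 - t.2.1 - t.2.2.2) ∧
        (s : ℤ) ≥ t.2.2.1 - 2 * t.2.2.2} = ∅ := by
      ext t
      simp only [Set.mem_setOf_eq, Set.mem_empty_iff_false, iff_false]
      rintro ⟨h1, h2, h3, h4, h5, -⟩
      omega
    rw [this, Set.ncard_empty]
  · -- even case
    intro heven
    obtain ⟨M, hM⟩ := heven
    set m : ℤ := (M : ℤ) with hm
    -- the Finset description of the solution set
    set lo : ℤ → ℤ := fun a => max (2*a) (max (2*m) (m+a)) with hlo
    set hi : ℤ → ℤ := fun a =>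
      min (6*m-2*a) (min (4*m) (min (2*m+2*a) (min (5*m-a) (3*m+a)))) with hhi
    set F : Finset (ℤ × ℤ × ℤ × ℤ) :=
      (Finset.Icc (0:ℤ) (2*m)).biUnion (fun a =>
        (Finset.Icc (lo a) (hi a)).image
          (fun b => ((4*m-b, 3*m-a, b, a) : ℤ × ℤ × ℤ × ℤ))) with hF
    have hset : {t : ℤ × ℤ × ℤ × ℤ |
        2 * t.2.1 ≥ t.2.2.1 ∧ t.2.2.1 ≥ 2 * t.2.2.2 ∧ t.2.2.2 ≥ 0 ∧
        t.1 ≥ 0 ∧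
        2 * (t.2.2.2 + t.2.1) = 3 * (s : ℤ) ∧
        t.1 + t.2.2.1 = 2 * (s : ℤ) ∧
        (s : ℤ) ≥ t.2.2.2 ∧ (s : ℤ) ≥ t.2.2.1 - t.2.1 ∧ (s : ℤ) ≥ t.2.1 - t.1 ∧
        (s : ℤ) ≥ t.1 ∧
        (s : ℤ) ≥ t.2.1 + 2 * t.2.2.2 - t.2.2.1 ∧ (s : ℤ) ≥ t.2.2.2 ∧
        (s : ℤ) ≥ t.1 + 2 * (t.2.2.1 - t.2.1 - t.2.2.2) ∧
        (s : ℤ) ≥ t.2.2.1 - 2 * t.2.2.2} = (F : Set (ℤ × ℤ × ℤ × ℤ)) := by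
      have hs : (s : ℤ) = 2 * m := by rw [hm]; push_cast [hM]; ring
      ext t
      obtain ⟨w, x, y, z⟩ := t
      simp only [Set.mem_setOf_eq, hF, Finset.coe_biUnion, Finset.mem_coe,
        Finset.mem_biUnion, Finset.mem_image, Finset.mem_Icc, Set.mem_iUnion,
        Prod.mk.injEq, hlo, hhi, hs]
      constructor
      · rintro ⟨h1, h2, h3, h4, h5, h6, h7, h8, h9, h10, h11, h12, h13, h14⟩
        refine ⟨z, ⟨by omega, by omega⟩, y, ⟨by omega, by omega⟩, by omega, by omega, rfl, rfl⟩
      · rintro ⟨a, ⟨ha1, ha2⟩, b, ⟨hb1, hb2⟩, hw, hx, rfl, rfl⟩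
        refine ⟨by omega, by omega, by omega, by omega, by omega, by omega, by omega,
          by omega, by omega, by omega, by omega, by omega, by omega, by omega⟩
    rw [hset, Set.ncard_coe_finset]
    -- compute the cardinality of F
    have hdisj : ∀ a ∈ Finset.Icc (0:ℤ) (2*m), ∀ a' ∈ Finset.Icc (0:ℤ) (2*m), a ≠ a' →
        Disjoint ((Finset.Icc (lo a) (hi a)).image
            (fun b => ((4*m-b, 3*m-a, b, a) : ℤ × ℤ × ℤ × ℤ)))
          ((Finset.Icc (lo a') (hi a')).image
            (fun b => ((4*m-b, 3*m-a', b, a') : ℤ × ℤ × ℤ × ℤ))) := by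
      intro a _ a' _ hne
      rw [Finset.disjoint_left]
      rintro p hp hq
      obtain ⟨b, -, rfl⟩ := Finset.mem_image.mp hp
      obtain ⟨b', -, he⟩ := Finset.mem_image.mp hq
      have haa : a' = a := by
        simpa using congrArg (fun q : ℤ × ℤ × ℤ × ℤ => q.2.2.2) he
      exact hne haa.symm
    have hcardF : F.card
        = ∑ a ∈ Finset.Icc (0:ℤ) (2*m), (hi a + 1 - lo a).toNat := by
      rw [hF, Finset.card_biUnion hdisj]
      refine Finset.sum_congr rfl (fun a _ => ?_)
      have hinj : Function.Injective
          (fun b : ℤ => ((4*m-b, 3*m-a, b, a) : ℤ × ℤ × ℤ × ℤ)) := by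
        intro b b' h
        simpa using congrArg (fun q : ℤ × ℤ × ℤ × ℤ => q.2.2.1) h
      rw [Finset.card_image_of_injective _ hinj, Int.card_Icc]
    have h2m : (2*m : ℤ) = ((2*M : ℕ) : ℤ) := by push_cast [hm]; ring
    rw [hcardF, h2m, bz_sum_Icc_int_eq_range (2*M) (fun a => (hi a + 1 - lo a).toNat),
      show 2*M + 1 = (M+1) + M by ring,
      bz_sum_range_split (fun i => (hi (i:ℤ) + 1 - lo (i:ℤ)).toNat) (M+1) M]
    have hA : ∑ i ∈ Finset.range (M+1), (hi (i:ℤ) + 1 - lo (i:ℤ)).toNat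
        = ∑ i ∈ Finset.range (M+1), (2*(i:ℤ)+1).toNat := by
      refine Finset.sum_congr rfl (fun i hi' => ?_)
      have hiM : i ≤ M := by simpa [Nat.lt_succ_iff] using Finset.mem_range.mp hi'
      have him : (i:ℤ) ≤ m := by rw [hm]; exact_mod_cast hiM
      simp only [hlo, hhi]
      have hm0 : (0:ℤ) ≤ m := by rw [hm]; positivity
      omega
    have hB : ∑ j ∈ Finset.range M, (hi ((M+1+j : ℕ):ℤ) + 1 - lo ((M+1+j : ℕ):ℤ)).toNat
        = ∑ j ∈ Finset.range M, (2*(M:ℤ) - 3 - 4*(j:ℤ)).toNat := by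
      refine Finset.sum_congr rfl (fun j hj => ?_)
      have hjM : j < M := Finset.mem_range.mp hj
      simp only [hlo, hhi, hm]
      push_cast
      omega
    rw [hA, hB, bz_sumA M]
    -- final arithmetic over ℝ
    set S : ℕ := ∑ j ∈ Finset.range M, (2*(M:ℤ) - 3 - 4*(j:ℤ)).toNat with hS
    have hBval := bz_sumB M
    rw [← hS] at hBval
    have hBR : 2 * (S : ℝ) + (M:ℝ) = (M:ℝ) * (M:ℝ) := by exact_mod_cast hBval
    have hsR : (s : ℝ) = 2 * (M : ℝ) := by rw [hM]; push_cast; ring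
    rw [hsR]
    push_cast
    linear_combination (1/2 : ℝ) * hBR
end
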